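/- arXiv:2408.10452 — 6 statements merged into one kernel-verified Lean document; each statement's English description precedes it below -/
import Mathlib

section
/- For any finite graph G on n vertices, B(G) = n−1 if and only if Δ(G) = n−1 (i.e., G has a universal vertex). -/
open SimpleGraph

/-- A token may stay in place or move along an edge. -/
def stepRel {V : Type*} (G : SimpleGraph V) (x y : V) : Prop := x = y ∨ G.Adj x y

/-- The sequence of positions in the pursuit game: `(gamePlay ...) n` is the pair
(pursuer positions, evader position) after `n` full rounds; at time `0` the pursuers
have been placed (`binit`) and then the evader placed (`pinit binit`). In each round,
the pursuers move first (via `bmove`, seeing the current state), then the evader moves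
(via `pmove`, seeing the pursuers' new positions and his own position). -/
def gamePlay {V : Type*} {k : ℕ} (binit : Fin k → V) (bmove : (Fin k → V) → V → Fin k → V)
    (pinit : (Fin k → V) → V) (pmove : (Fin k → V) → V → V) : ℕ → (Fin k → V) × V
  | 0 => (binit, pinit binit)
  | n + 1 =>
      let s := gamePlay binit bmove pinit pmove n
      (bmove s.1 s.2, pmove (bmove s.1 s.2) s.2)

/-- `k` bodyguards have a winning strategy on `G`: they can place themselves and move so
that, against every president strategy, after finitely many rounds they occupy the whole
open neighbourhood of the president's vertex at the end of every bodyguard turn. -/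
def BodyguardsWin {V : Type*} (G : SimpleGraph V) (k : ℕ) : Prop :=
  ∃ (binit : Fin k → V) (bmove : (Fin k → V) → V → Fin k → V),
    (∀ bs p i, stepRel G (bs i) (bmove bs p i)) ∧
    ∀ (pinit : (Fin k → V) → V) (pmove : (Fin k → V) → V → V),
      (∀ bs p, stepRel G p (pmove bs p)) →
      ∃ N, ∀ n, N ≤ n →
        ∀ v, G.Adj (gamePlay binit bmove pinit pmove n).2 v →
          ∃ i, (gamePlay binit bmove pinit pmove (n + 1)).1 i = v

/-- The bodyguard number of a finite graph. -/
noncomputable def bodyguardNumber {V : Type*} (G : SimpleGraph V) [Fintype V] : ℕ :=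
  sInf {k | BodyguardsWin G k}

/-- `k` cops have a winning strategy in classic Cops and Robber on `G`: at some point a cop
occupies the same vertex as the robber (either right after a cop move, or at the end of a
round). -/
def CopsWin {V : Type*} (G : SimpleGraph V) (k : ℕ) : Prop :=
  ∃ (cinit : Fin k → V) (cmove : (Fin k → V) → V → Fin k → V),
    (∀ cs r i, stepRel G (cs i) (cmove cs r i)) ∧
    ∀ (rinit : (Fin k → V) → V) (rmove : (Fin k → V) → V → V),
      (∀ cs r, stepRel G r (rmove cs r)) →
      ∃ n i, (gamePlay cinit cmove rinit rmove (n + 1)).1 i =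
                (gamePlay cinit cmove rinit rmove n).2 ∨
             (gamePlay cinit cmove rinit rmove n).1 i =
                (gamePlay cinit cmove rinit rmove n).2

/-- The cop number of a finite graph. -/
noncomputable def copNumber {V : Type*} (G : SimpleGraph V) [Fintype V] : ℕ :=
  sInf {k | CopsWin G k}

/-!
With a universal vertex `u`, a president who never leaves `u` needs a guard on every other vertex,
while `n - 1` guards always win: the single unguarded vertex (the hole) is carried onto the
president along a path, each guard on the path stepping one place forward.

Without a universal vertex `n - 2` guards win. If `G` is disconnected, the two holes are kept in
different components and the one in the president's component is carried onto him. If `G` is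
connected, the holes `a, b` are kept non-adjacent and not both dominated by one vertex, where `x`
dominates `v` if the component of `v` in `G - x` lies in the neighbourhood of `x`. When the
president steps next to `b`, the hole `b` (or `a`) moves onto him, and the other hole escapes along
a disjoint path to a vertex forming such a safe pair with him; if no escape existed, `b` would
dominate `a`, or the president's vertex would dominate both holes.
-/

namespace SimpleGraph

variable {V : Type*} {G : SimpleGraph V}

lemma Walk.IsPath.start_notMem_support_dropUntil [DecidableEq V] {u v y : V} {P : G.Walk u v}
    (hP : P.IsPath) (hy : y ∈ P.support) (hyu : y ≠ u) : u ∉ (P.dropUntil y hy).support := by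
  intro hu
  have hsplit := congrArg Walk.support (P.take_spec hy)
  rw [Walk.support_append] at hsplit
  have hnodup := hP.support_nodup
  rw [← hsplit, List.nodup_append] at hnodup
  rw [← Walk.cons_tail_support] at hu
  exact hnodup.2.2 u (P.takeUntil y hy).start_mem_support u
    ((List.mem_cons.1 hu).resolve_left hyu.symm) rfl

def ReachableAvoiding (G : SimpleGraph V) (X : Set V) (u v : V) : Prop :=
  ∃ w : G.Walk u v, ∀ x ∈ w.support, x ∉ X

namespace ReachableAvoiding

variable {X : Set V} {u v w q : V}

lemma left_notMem (h : G.ReachableAvoiding X u v) : u ∉ X :=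
  h.choose_spec u h.choose.start_mem_support

lemma right_notMem (h : G.ReachableAvoiding X u v) : v ∉ X :=
  h.choose_spec v h.choose.end_mem_support

lemma refl (hu : u ∉ X) : G.ReachableAvoiding X u u :=
  ⟨Walk.nil, by simpa using hu⟩

lemma symm (h : G.ReachableAvoiding X u v) : G.ReachableAvoiding X v u := by
  obtain ⟨w, hw⟩ := h
  exact ⟨w.reverse, by simpa using hw⟩

lemma trans (h₁ : G.ReachableAvoiding X u v) (h₂ : G.ReachableAvoiding X v w) :
    G.ReachableAvoiding X u w := by
  obtain ⟨w₁, hw₁⟩ := h₁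
  obtain ⟨w₂, hw₂⟩ := h₂
  refine ⟨w₁.append w₂, fun x hx => ?_⟩
  rw [Walk.support_append, List.mem_append] at hx
  exact hx.elim (hw₁ x) (fun hx => hw₂ x (List.mem_of_mem_tail hx))

lemma of_adj (h : G.Adj u v) (hu : u ∉ X) (hv : v ∉ X) : G.ReachableAvoiding X u v :=
  ⟨h.toWalk, by simp [hu, hv]⟩

lemma exists_isPath [DecidableEq V] (h : G.ReachableAvoiding X u v) :
    ∃ w : G.Walk u v, w.IsPath ∧ ∀ x ∈ w.support, x ∉ X := by
  obtain ⟨w, hw⟩ := h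
  exact ⟨w.bypass, w.bypass_isPath, fun x hx => hw x (w.support_bypass_subset_support hx)⟩

lemma of_not_insert [DecidableEq V] (h : G.ReachableAvoiding X u v)
    (h' : ¬ G.ReachableAvoiding (insert q X) u v) : G.ReachableAvoiding X u q := by
  obtain ⟨w, hw⟩ := h
  have hq : q ∈ w.support := by
    by_contra hq
    exact h' ⟨w, fun x hx hxq => (Set.mem_insert_iff.1 hxq).elim (fun h => hq (h ▸ hx)) (hw x hx)⟩
  exact ⟨w.takeUntil q hq, fun x hx => hw x (w.support_takeUntil_subset_support hq hx)⟩

/-- A path from `u` to `v` avoiding `X` passes through `q`, and avoids `u` from `q` on. -/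
lemma of_not_insert' [DecidableEq V] (hqu : q ≠ u) (h : G.ReachableAvoiding X u v)
    (h' : ¬ G.ReachableAvoiding (insert q X) u v) : G.ReachableAvoiding (insert u X) q v := by
  obtain ⟨w, hw, hwX⟩ := h.exists_isPath
  have hq : q ∈ w.support := by
    by_contra hq
    exact h' ⟨w, fun x hx hxq => (Set.mem_insert_iff.1 hxq).elim (fun h => hq (h ▸ hx)) (hwX x hx)⟩
  refine ⟨w.dropUntil q hq, fun x hx hxu => ?_⟩
  rcases Set.mem_insert_iff.1 hxu with rfl | hxX
  · exact hw.start_notMem_support_dropUntil hq hqu hx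
  · exact hwX x (w.support_dropUntil_subset_support hq hx) hxX

/-- Were a path from `u` to `v` to meet some `q ∈ X`, its part from `q` on would avoid `u`. -/
lemma of_preconnected [DecidableEq V] (hG : G.Preconnected) (hu : u ∉ X)
    (hX : ∀ q ∈ X, ¬ G.ReachableAvoiding {u} q v) : G.ReachableAvoiding X u v := by
  obtain ⟨w⟩ := hG u v
  refine ⟨w.bypass, fun y hy hyX => hX y hyX ⟨w.bypass.dropUntil y hy, fun x hx hxu => ?_⟩⟩
  rw [Set.mem_singleton_iff] at hxu
  subst hxu
  exact w.bypass_isPath.start_notMem_support_dropUntil hy (fun h => hu (h ▸ hyX)) hx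

end ReachableAvoiding

/-- Vacuously, every vertex dominates itself: no walk avoiding `x` starts at `x`. -/
def Dominates (G : SimpleGraph V) (x v : V) : Prop :=
  ∀ u, G.ReachableAvoiding {x} v u → G.Adj x u

def IsSafePair (G : SimpleGraph V) (a b : V) : Prop :=
  ¬ G.Adj a b ∧ ∀ x, ¬ (G.Dominates x a ∧ G.Dominates x b)

variable {a b p u v x z : V}

lemma dominates_self : G.Dominates x x :=
  fun _ h => absurd rfl h.left_notMem

lemma Dominates.eq_or_adj (h : G.Dominates x v) : v = x ∨ G.Adj x v := by
  by_cases hvx : v = x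
  · exact Or.inl hvx
  · exact Or.inr (h v (.refl hvx))

lemma Dominates.adj (h : G.Dominates x v) (hvx : v ≠ x) : G.Adj x v :=
  h.eq_or_adj.resolve_left hvx

lemma Dominates.of_reachableAvoiding (h : G.Dominates x u)
    (hvu : G.ReachableAvoiding {x} v u) : G.Dominates x v :=
  fun w hw => h w (hvu.symm.trans hw)

lemma IsSafePair.symm (h : G.IsSafePair a b) : G.IsSafePair b a :=
  ⟨fun hba => h.1 hba.symm, fun x hx => h.2 x hx.symm⟩

lemma IsSafePair.not_dominates (h : G.IsSafePair a b) : ¬ G.Dominates b a :=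
  fun hba => h.2 b ⟨hba, dominates_self⟩

lemma IsSafePair.ne (h : G.IsSafePair a b) : a ≠ b := by
  rintro rfl
  exact h.not_dominates dominates_self

lemma isSafePair_of_forall_not_adj (hzp : z ≠ p) (hpz : ¬ G.Adj p z)
    (hpath : ∀ x, G.Adj p x → ¬ G.Adj x z) : G.IsSafePair p z := by
  refine ⟨hpz, fun x ⟨hxp, hxz⟩ => ?_⟩
  rcases hxp.eq_or_adj with rfl | hxp
  · exact hpz (hxz.adj hzp)
  rcases hxz.eq_or_adj with rfl | hxz
  · exact hpz hxp.symm
  · exact hpath x hxp.symm hxz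

/-- Such a `z` is at distance at least three from `p`. -/
lemma isSafePair_of_not_reachableAvoiding (hxp : G.Adj x p) (hxz : ¬ G.Adj x z) (hzx : z ≠ x)
    (hcut : ¬ G.ReachableAvoiding {x} p z) : G.IsSafePair p z := by
  have hp : p ∉ ({x} : Set V) := hxp.ne'
  have hz : z ∉ ({x} : Set V) := hzx
  refine isSafePair_of_forall_not_adj ?_ ?_ fun w hpw hwz => ?_
  · rintro rfl
    exact hcut (.refl hp)
  · exact fun hpz => hcut (.of_adj hpz hp hz)
  · have hw : w ∉ ({x} : Set V) := by rintro rfl; exact hxz hwz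
    exact hcut ((ReachableAvoiding.of_adj hpw hp hw).trans (.of_adj hwz hw hz))

lemma dominates_of_forall_adj [DecidableEq V] (hab : a ≠ b)
    (ha : ∀ u, G.ReachableAvoiding {p, b} a u → G.Adj p u)
    (hb : ∀ u, G.ReachableAvoiding {p, a} b u → G.Adj p u) : G.Dominates p b := by
  intro u hu
  by_cases hbu : G.ReachableAvoiding {p, a} b u
  · exact hb u hbu
  · rw [Set.pair_comm] at hbu
    exact ha u (by simpa only [Set.pair_comm] using hu.of_not_insert' hab hbu)

section Connected

variable [DecidableEq V]

lemma exists_isSafePair_reachableAvoiding_of_dominates (hG : G.Preconnected)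
    (hnu : ∀ x, ¬ G.IsUniversal x) (hxp : G.Adj x p) (hdom : G.Dominates x p)
    (hb : G.ReachableAvoiding {x} p b) :
    ∃ z, G.IsSafePair p z ∧ G.ReachableAvoiding {p, b} x z := by
  obtain ⟨z, hxz, hnadj⟩ : ∃ z, x ≠ z ∧ ¬ G.Adj x z := by
    simpa [IsUniversal] using hnu x
  have hcut : ¬ G.ReachableAvoiding {x} p z := fun h => hnadj (hdom z h)
  refine ⟨z, isSafePair_of_not_reachableAvoiding hxp hnadj hxz.symm hcut, ?_⟩
  refine .of_preconnected hG (by simp [hxp.ne, Ne.symm hb.right_notMem]) fun q hq => ?_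
  rcases hq with rfl | rfl
  · exact hcut
  · exact fun h => hcut (hb.trans h)

lemma exists_isSafePair [Nonempty V] (hG : G.Preconnected) (hnu : ∀ x, ¬ G.IsUniversal x) :
    ∃ a b, G.IsSafePair a b := by
  obtain ⟨v⟩ := ‹Nonempty V›
  obtain ⟨z, hvz, hnadj⟩ : ∃ z, v ≠ z ∧ ¬ G.Adj v z := by
    simpa [IsUniversal] using hnu v
  by_cases hsafe : G.IsSafePair v z
  · exact ⟨v, z, hsafe⟩
  obtain ⟨x, hxv, hxz⟩ : ∃ x, G.Dominates x v ∧ G.Dominates x z := by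
    by_contra! h
    exact hsafe ⟨hnadj, fun x hx => h x hx.1 hx.2⟩
  have hvx : v ≠ x := by
    rintro rfl
    exact hnadj (hxz.adj hvz.symm)
  obtain ⟨z', hz', -⟩ := exists_isSafePair_reachableAvoiding_of_dominates hG hnu
    (hxv.adj hvx) hxv (.refl hvx)
  exact ⟨v, z', hz'⟩

/-- The pair `p, u` is not safe, and a vertex other than `b` dominating both would let the hole at
`a` escape through it. -/
lemma dominates_of_forall_not_reachableAvoiding (hG : G.Preconnected)
    (hnu : ∀ x, ¬ G.IsUniversal x) (hpb : G.Adj p b)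
    (hA : ∀ s, G.IsSafePair p s → ¬ G.ReachableAvoiding {p, b} a s)
    (hu : G.ReachableAvoiding {p, b} a u) (hpu : ¬ G.Adj p u) : G.Dominates b p := by
  have hu' : u ≠ p ∧ u ≠ b := by simpa [not_or] using hu.right_notMem
  obtain ⟨x, hxp, hxu⟩ : ∃ x, G.Dominates x p ∧ G.Dominates x u := by
    by_contra! h
    exact hA u ⟨hpu, fun x hx => h x hx.1 hx.2⟩ hu
  have hpx : p ≠ x := by
    rintro rfl
    exact hpu (hxu.adj hu'.1)
  by_cases hbx : b = x
  · exact hbx ▸ hxp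
  have hx : x ∉ ({p, b} : Set V) := by simp [Ne.symm hpx, Ne.symm hbx]
  have hux : G.ReachableAvoiding {p, b} u x := by
    rcases hxu.eq_or_adj with rfl | hxu
    · exact .refl hx
    · exact .of_adj hxu.symm hu.right_notMem hx
  obtain ⟨z, hz, hxz⟩ := exists_isSafePair_reachableAvoiding_of_dominates hG hnu
    (hxp.adj hpx) hxp (.of_adj hpb hpx hbx)
  exact (hA z hz ((hu.trans hux).trans hxz)).elim

lemma forall_adj_of_forall_not_reachableAvoiding (hG : G.Preconnected)
    (hnu : ∀ x, ¬ G.IsUniversal x) (hab : G.IsSafePair a b) (hpa : G.Adj p a)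
    (hpb : G.Adj p b) (hA : ∀ s, G.IsSafePair p s → ¬ G.ReachableAvoiding {p, b} a s) :
    ∀ u, G.ReachableAvoiding {p, b} a u → G.Adj p u := by
  intro u hu
  by_contra hpu
  have hbp := dominates_of_forall_not_reachableAvoiding hG hnu hpb hA hu hpu
  exact hab.not_dominates (hbp.of_reachableAvoiding (.of_adj hpa.symm hab.ne hpb.ne))

lemma exists_isSafePair_reachableAvoiding (hG : G.Preconnected) (hnu : ∀ x, ¬ G.IsUniversal x)
    (hab : G.IsSafePair a b) (hpb : G.Adj p b) :
    (∃ s, G.IsSafePair p s ∧ G.ReachableAvoiding {p, b} a s) ∨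
      (G.Adj p a ∧ ∃ s, G.IsSafePair p s ∧ G.ReachableAvoiding {p, a} b s) := by
  by_cases hpa : G.Adj p a
  · by_contra! h
    obtain ⟨hA, hB⟩ := h
    have ha := forall_adj_of_forall_not_reachableAvoiding hG hnu hab hpa hpb hA
    have hb := forall_adj_of_forall_not_reachableAvoiding hG hnu hab.symm hpb hpa (hB hpa)
    exact hab.2 p ⟨dominates_of_forall_adj hab.ne.symm hb ha, dominates_of_forall_adj hab.ne ha hb⟩
  · left
    by_contra! hA
    have hap : a ≠ p := by
      rintro rfl
      exact hab.1 hpb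
    have ha : a ∉ ({p, b} : Set V) := by simp [hab.ne, hap]
    have hbp := dominates_of_forall_not_reachableAvoiding hG hnu hpb hA (.refl ha) hpa
    obtain ⟨u, hau, hbu⟩ : ∃ u, G.ReachableAvoiding {b} a u ∧ ¬ G.Adj b u := by
      simpa [Dominates] using hab.not_dominates
    have hcut : ¬ G.ReachableAvoiding {b} a p :=
      fun h => hab.not_dominates (hbp.of_reachableAvoiding h)
    refine hA u (isSafePair_of_not_reachableAvoiding hpb.symm hbu hau.right_notMem
      fun h => hcut (hau.trans h.symm)) ?_
    by_contra h
    exact hcut (hau.of_not_insert h)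

end Connected

lemma maxDegree_eq_card_sub_one_iff [Fintype V] [Nonempty V] [DecidableRel G.Adj] :
    G.maxDegree = Fintype.card V - 1 ↔ ∃ v, G.IsUniversal v := by
  obtain ⟨v, hv⟩ := G.exists_maximal_degree_vertex
  refine ⟨fun h => ⟨v, (G.degree_eq_card_sub_one v).1 (hv ▸ h)⟩, fun ⟨u, hu⟩ => ?_⟩
  refine (Nat.le_sub_one_of_lt G.maxDegree_lt_card_verts).antisymm ?_
  exact (G.degree_eq_card_sub_one u).2 hu ▸ G.degree_le_maxDegree u

end SimpleGraph

section Game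

variable {V : Type*} {G : SimpleGraph V} {a b p : V}

section Moves

variable [DecidableEq V]

def nextIn : List V → V → V
  | x :: y :: t, v => if v = x then y else nextIn (y :: t) v
  | _, v => v

lemma nextIn_of_notMem : ∀ {l : List V} {v : V}, v ∉ l → nextIn l v = v
  | [], _, _ | [_], _, _ => rfl
  | x :: y :: t, v, hv => by
    rw [nextIn, if_neg (by grind), nextIn_of_notMem (by grind)]

lemma nextIn_mem : ∀ {l : List V} {v : V}, v ∈ l → nextIn l v ∈ l
  | [], _, hv => hv
  | [_], _, hv => hv
  | x :: y :: t, v, hv => by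
    by_cases hvx : v = x
    · simp [nextIn, hvx]
    · rw [nextIn, if_neg hvx]
      exact List.mem_cons_of_mem _ (nextIn_mem (by grind))

lemma stepRel_nextIn : ∀ {l : List V}, l.IsChain G.Adj → ∀ v, stepRel G v (nextIn l v)
  | [], _, _ | [_], _, _ => Or.inl rfl
  | x :: y :: t, hl, v => by
    rw [List.isChain_cons_cons] at hl
    by_cases hvx : v = x
    · subst hvx
      simpa [nextIn, stepRel] using Or.inr hl.1
    · rw [nextIn, if_neg hvx]
      exact stepRel_nextIn hl.2 v

lemma exists_nextIn_eq : ∀ {l : List V}, l.Nodup → ∀ {u}, u ∈ l.tail →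
    ∃ t ∈ l.dropLast, nextIn l t = u
  | [], _, _, hu | [_], _, _, hu => by simp at hu
  | x :: y :: t, hl, u, hu => by
    rw [List.nodup_cons] at hl
    by_cases huy : u = y
    · exact ⟨x, by simp, by simp [nextIn, huy]⟩
    · obtain ⟨s, hs, rfl⟩ := exists_nextIn_eq hl.2 (u := u) (by grind)
      have hsx : s ≠ x := fun h => hl.1 (h ▸ List.dropLast_subset _ hs)
      exact ⟨s, by simp [hs], by rw [nextIn, if_neg hsx]⟩

lemma stepRel_nextIn_support {c a : V} (P : G.Walk c a) (v : V) :
    stepRel G v (nextIn P.support v) :=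
  stepRel_nextIn P.isChain_adj_support v

/-- Moving every guard on a path from `c` to `a` one step towards `a` transfers the hole at `a`
to `c`, without disturbing the holes in `S`. -/
lemma surjOn_nextIn_support {c a : V} {P : G.Walk c a} (hP : P.IsPath) {S : Set V}
    (hS : ∀ v ∈ P.support, v ∉ S) :
    Set.SurjOn (nextIn P.support) (insert a S)ᶜ (insert c S)ᶜ := by
  intro u hu
  simp only [Set.mem_compl_iff, Set.mem_insert_iff, not_or] at hu
  by_cases huP : u ∈ P.support
  · rw [← P.cons_tail_support] at huP
    obtain ⟨t, ht, rfl⟩ :=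
      exists_nextIn_eq hP.support_nodup ((List.mem_cons.1 huP).resolve_left hu.1)
    have hsplit := List.dropLast_append_getLast P.support_ne_nil
    rw [P.getLast_support] at hsplit
    have hta : t ≠ a := by
      rintro rfl
      have := hP.support_nodup
      rw [← hsplit, List.nodup_append] at this
      exact this.2.2 t ht t (by simp) rfl
    exact ⟨t, by simp [hta, hS t (List.dropLast_subset _ ht)], rfl⟩
  · have hua : u ≠ a := fun h => huP (h ▸ P.end_mem_support)
    exact ⟨u, by simp [hu.2, hua], nextIn_of_notMem huP⟩

lemma exists_move_of_isPath {c a : V} {P : G.Walk c a} (hP : P.IsPath) {S : Set V}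
    (hS : ∀ v ∈ P.support, v ∉ S) :
    ∃ f : V → V, (∀ v, stepRel G v (f v)) ∧ Set.SurjOn f (insert a S)ᶜ (insert c S)ᶜ :=
  ⟨_, stepRel_nextIn_support P, surjOn_nextIn_support hP hS⟩

lemma exists_move_of_isPath_of_isPath {a b c d : V} {P : G.Walk c a} {Q : G.Walk d b}
    (hP : P.IsPath) (hQ : Q.IsPath) (hPQ : ∀ v ∈ P.support, v ∉ Q.support) :
    ∃ f : V → V, (∀ v, stepRel G v (f v)) ∧ Set.SurjOn f {a, b}ᶜ {c, d}ᶜ := by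
  refine ⟨nextIn Q.support ∘ nextIn P.support, fun v => ?_, ?_⟩
  · by_cases hv : v ∈ P.support
    · rw [Function.comp_apply, nextIn_of_notMem (hPQ _ (nextIn_mem hv))]
      exact stepRel_nextIn_support P v
    · rw [Function.comp_apply, nextIn_of_notMem hv]
      exact stepRel_nextIn_support Q v
  · have hP' := surjOn_nextIn_support hP (S := {b}) fun v hv hvb =>
      hPQ v hv (hvb ▸ Q.end_mem_support)
    have hQ' := surjOn_nextIn_support hQ (S := {c}) fun v hv hvc =>
      hPQ v (hvc ▸ P.start_mem_support) hv
    rw [Set.pair_comm b c] at hQ'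
    simpa only [Set.pair_comm d c] using hQ'.comp hP'

lemma exists_move_of_not_reachable (hab : ¬ G.Reachable a b) (hap : G.Reachable a p) :
    ∃ f : V → V, (∀ v, stepRel G v (f v)) ∧ Set.SurjOn f {a, b}ᶜ {p, b}ᶜ := by
  obtain ⟨w⟩ := hap.symm
  exact exists_move_of_isPath w.bypass_isPath fun v hv hvb =>
    hab (hap.trans (hvb ▸ ⟨w.bypass.takeUntil v hv⟩))

lemma exists_move_of_adj (hG : G.Preconnected) (hnu : ∀ x, ¬ G.IsUniversal x)
    (hab : G.IsSafePair a b) (hpb : G.Adj p b) :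
    ∃ s, G.IsSafePair s p ∧ ¬ G.Adj p s ∧
      ∃ f : V → V, (∀ v, stepRel G v (f v)) ∧ Set.SurjOn f {a, b}ᶜ {s, p}ᶜ := by
  rcases exists_isSafePair_reachableAvoiding hG hnu hab hpb with
    ⟨s, hs, has⟩ | ⟨hpa, s, hs, hbs⟩
  · obtain ⟨P, hP, hPX⟩ := has.symm.exists_isPath
    refine ⟨s, hs.symm, hs.1, exists_move_of_isPath_of_isPath hP hpb.isPath_toWalk ?_⟩
    simpa using hPX
  · obtain ⟨P, hP, hPX⟩ := hbs.symm.exists_isPath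
    rw [Set.pair_comm a b]
    refine ⟨s, hs.symm, hs.1, exists_move_of_isPath_of_isPath hP hpa.isPath_toWalk ?_⟩
    simpa using hPX

end Moves

lemma exists_compl_subset_range [Fintype V] (H : Finset V) :
    ∃ bs : Fin (Fintype.card V - H.card) → V, (↑H : Set V)ᶜ ⊆ Set.range bs := by
  classical
  have hk : Hᶜ.card = Fintype.card V - H.card := Finset.card_compl H
  exact ⟨fun i => (Hᶜ.equivFin.symm (Fin.cast hk.symm i) : V), fun v hv =>
    ⟨Fin.cast hk (Hᶜ.equivFin ⟨v, by simpa using hv⟩), by simp⟩⟩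

/-- `H` is the set of unguarded vertices; `Set.SurjOn f Hᶜ H'ᶜ` says that after the move `f` the
guards cover `H'ᶜ`. -/
theorem bodyguardsWin_of_holes [Fintype V] (Inv : Set V → Prop) (H₀ : Finset V)
    (h₀ : Inv H₀)
    (hstep : ∀ H p, Inv H → ∃ (f : V → V) (H' : Set V), (∀ v, stepRel G v (f v)) ∧ Inv H' ∧
      (∀ x ∈ H', ¬ G.Adj p x) ∧ Set.SurjOn f Hᶜ H'ᶜ) :
    BodyguardsWin G (Fintype.card V - H₀.card) := by
  classical
  set k := Fintype.card V - H₀.card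
  obtain ⟨binit, hbinit⟩ := exists_compl_subset_range H₀
  let Good : (Fin k → V) → V → (V → V) → Prop := fun bs p f =>
    (∀ v, stepRel G v (f v)) ∧
      ∃ H, Inv H ∧ (∀ x ∈ H, ¬ G.Adj p x) ∧ Hᶜ ⊆ Set.range (f ∘ bs)
  let bmove : (Fin k → V) → V → Fin k → V := fun bs p =>
    if hf : ∃ f, Good bs p f then hf.choose ∘ bs else bs
  have hbmove : ∀ bs p H, Inv H → Hᶜ ⊆ Set.range bs →
      ∃ H', Inv H' ∧ (∀ x ∈ H', ¬ G.Adj p x) ∧ H'ᶜ ⊆ Set.range (bmove bs p) := by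
    intro bs p H hH hbs
    obtain ⟨f, H', hf, hH', hp, hsurj⟩ := hstep H p hH
    have hgood : ∃ f, Good bs p f :=
      ⟨f, hf, H', hH', hp, hsurj.trans (Set.range_comp f bs ▸ Set.image_mono hbs)⟩
    simp only [bmove, dif_pos hgood]
    exact hgood.choose_spec.2
  refine ⟨binit, bmove, fun bs p i => ?_, fun pinit pmove _ => ⟨0, fun n _ v hv => ?_⟩⟩
  · by_cases hf : ∃ f, Good bs p f
    · simp only [bmove, dif_pos hf]
      exact hf.choose_spec.1 (bs i)
    · simp only [bmove, dif_neg hf]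
      exact Or.inl rfl
  · have hinv : ∀ n, ∃ H, Inv H ∧ Hᶜ ⊆ Set.range (gamePlay binit bmove pinit pmove n).1 := by
      intro n
      induction n with
      | zero => exact ⟨H₀, h₀, hbinit⟩
      | succ n ih =>
        obtain ⟨H, hH, hbs⟩ := ih
        obtain ⟨H', hH', -, hbs'⟩ := hbmove _ _ H hH hbs
        exact ⟨H', hH', hbs'⟩
    obtain ⟨H, hH, hbs⟩ := hinv n
    obtain ⟨H', -, hp, hbs'⟩ := hbmove _ (gamePlay binit bmove pinit pmove n).2 H hH hbs
    exact hbs' fun hvH' => hp v hvH' hv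

lemma bodyguardsWin_zero [IsEmpty V] : BodyguardsWin G 0 :=
  ⟨fun i => i.elim0, fun _ _ i => i.elim0, fun _ _ i => i.elim0,
    fun _ _ _ => ⟨0, fun _ _ v => isEmptyElim v⟩⟩

lemma bodyguardsWin_card_sub_one [Fintype V] [Nonempty V] :
    BodyguardsWin G (Fintype.card V - 1) := by
  classical
  obtain ⟨v⟩ := ‹Nonempty V›
  simpa using bodyguardsWin_of_holes (G := G) (fun H => ∃ a, H = {a}) {v} ⟨v, by simp⟩ <| by
    rintro _ p ⟨a, rfl⟩
    by_cases hap : G.Reachable a p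
    · obtain ⟨w⟩ := hap.symm
      obtain ⟨f, hf, hsurj⟩ := exists_move_of_isPath w.bypass_isPath (S := ∅) (by simp)
      exact ⟨f, {p}, hf, ⟨p, rfl⟩, by simp, by simpa using hsurj⟩
    · exact ⟨id, {a}, fun _ => Or.inl rfl, ⟨a, rfl⟩,
        by simpa using fun h : G.Adj p a => hap h.reachable.symm, Set.surjOn_id _⟩

/-- The holes stay in different components: the one in the president's component moves onto
him. -/
lemma bodyguardsWin_card_sub_two_of_not_preconnected [Fintype V] (hG : ¬ G.Preconnected) :
    BodyguardsWin G (Fintype.card V - 2) := by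
  classical
  obtain ⟨u, v, huv⟩ : ∃ u v, ¬ G.Reachable u v := by simpa [Preconnected] using hG
  have hne : u ≠ v := fun h => huv (h ▸ Reachable.refl u)
  let Inv : Set V → Prop := fun H => ∃ a b, ¬ G.Reachable a b ∧ H = {a, b}
  have hmove : ∀ a b p, ¬ G.Reachable a b → G.Reachable a p → ∃ (f : V → V) (H' : Set V),
      (∀ v, stepRel G v (f v)) ∧ Inv H' ∧ (∀ x ∈ H', ¬ G.Adj p x) ∧
        Set.SurjOn f {a, b}ᶜ H'ᶜ := by
    intro a b p hab hap
    have hpb : ¬ G.Reachable p b := fun h => hab (hap.trans h)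
    obtain ⟨f, hf, hsurj⟩ := exists_move_of_not_reachable hab hap
    exact ⟨f, {p, b}, hf, ⟨p, b, hpb, rfl⟩,
      by simpa using fun h : G.Adj p b => hpb h.reachable, hsurj⟩
  simpa [Finset.card_pair hne] using bodyguardsWin_of_holes (G := G) Inv {u, v}
    ⟨u, v, huv, by simp⟩ <| by
    rintro _ p ⟨a, b, hab, rfl⟩
    by_cases hap : G.Reachable a p
    · exact hmove a b p hab hap
    by_cases hbp : G.Reachable b p
    · simpa only [Set.pair_comm b a] using hmove b a p (fun h => hab h.symm) hbp
    · exact ⟨id, {a, b}, fun _ => Or.inl rfl, ⟨a, b, hab, rfl⟩,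
        by simpa using ⟨fun h => hap h.reachable.symm, fun h => hbp h.reachable.symm⟩,
        Set.surjOn_id _⟩

lemma bodyguardsWin_card_sub_two_of_preconnected [Fintype V] [DecidableEq V] [Nonempty V]
    (hG : G.Preconnected) (hnu : ∀ x, ¬ G.IsUniversal x) :
    BodyguardsWin G (Fintype.card V - 2) := by
  obtain ⟨a₀, b₀, h₀⟩ := exists_isSafePair hG hnu
  let Inv : Set V → Prop := fun H => ∃ a b, G.IsSafePair a b ∧ H = {a, b}
  have hmove : ∀ a b p, G.IsSafePair a b → G.Adj p b → ∃ (f : V → V) (H' : Set V),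
      (∀ v, stepRel G v (f v)) ∧ Inv H' ∧ (∀ x ∈ H', ¬ G.Adj p x) ∧
        Set.SurjOn f {a, b}ᶜ H'ᶜ := by
    intro a b p hab hpb
    obtain ⟨s, hs, hps, f, hf, hsurj⟩ := exists_move_of_adj hG hnu hab hpb
    exact ⟨f, {s, p}, hf, ⟨s, p, hs, rfl⟩, by simpa using hps, hsurj⟩
  simpa [Finset.card_pair h₀.ne] using bodyguardsWin_of_holes (G := G) Inv {a₀, b₀}
    ⟨a₀, b₀, h₀, by simp⟩ <| by
    rintro _ p ⟨a, b, hab, rfl⟩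
    by_cases hpb : G.Adj p b
    · exact hmove a b p hab hpb
    by_cases hpa : G.Adj p a
    · simpa only [Set.pair_comm b a] using hmove b a p hab.symm hpa
    · exact ⟨id, {a, b}, fun _ => Or.inl rfl, ⟨a, b, hab, rfl⟩, by simp [hpa, hpb],
        Set.surjOn_id _⟩

lemma bodyguardsWin_card_sub_two [Fintype V] [Nonempty V] (hnu : ∀ x, ¬ G.IsUniversal x) :
    BodyguardsWin G (Fintype.card V - 2) := by
  classical
  by_cases hG : G.Preconnected
  · exact bodyguardsWin_card_sub_two_of_preconnected hG hnu
  · exact bodyguardsWin_card_sub_two_of_not_preconnected hG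

/-- The president never leaves `u`. -/
lemma not_bodyguardsWin_of_isUniversal [Fintype V] {u : V} (hu : G.IsUniversal u) {k : ℕ}
    (hk : k < Fintype.card V - 1) : ¬ BodyguardsWin G k := by
  classical
  rintro ⟨binit, bmove, -, hwin⟩
  obtain ⟨N, hN⟩ := hwin (fun _ => u) (fun _ p => p) (fun _ _ => Or.inl rfl)
  have hstay : ∀ n, (gamePlay binit bmove (fun _ => u) (fun _ p => p) n).2 = u := by
    intro n
    induction n with
    | zero => rfl
    | succ n ih => exact ih
  have hcover : ({u}ᶜ : Finset V) ⊆
      Finset.univ.image (gamePlay binit bmove (fun _ => u) (fun _ p => p) (N + 1)).1 := by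
    intro v hv
    obtain ⟨i, hi⟩ := hN N le_rfl v (by rw [hstay]; exact hu (by simpa [eq_comm] using hv))
    exact Finset.mem_image.2 ⟨i, Finset.mem_univ i, hi⟩
  have := (Finset.card_le_card hcover).trans Finset.card_image_le
  simp only [Finset.card_compl, Finset.card_singleton, Finset.card_univ, Fintype.card_fin] at this
  omega

lemma bodyguardNumber_le [Fintype V] {k : ℕ} (h : BodyguardsWin G k) : bodyguardNumber G ≤ k :=
  Nat.sInf_le h

lemma bodyguardNumber_eq [Fintype V] {k : ℕ} (h : BodyguardsWin G k)
    (hlt : ∀ j < k, ¬ BodyguardsWin G j) : bodyguardNumber G = k :=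
  (bodyguardNumber_le h).antisymm <| le_csInf ⟨k, h⟩ fun j hj => not_lt.1 fun hjk => hlt j hjk hj

end Game

/-- For any finite graph `G` on `n` vertices, `B(G) = n - 1` iff `Δ(G) = n - 1`. -/
theorem bodyguardNumber_eq_card_sub_one_iff {V : Type*} [Fintype V] (G : SimpleGraph V)
    [DecidableRel G.Adj] :
    bodyguardNumber G = Fintype.card V - 1 ↔ G.maxDegree = Fintype.card V - 1 := by
  cases isEmpty_or_nonempty V
  · have := bodyguardNumber_le (bodyguardsWin_zero (G := G))
    simp only [Fintype.card_eq_zero, G.maxDegree_of_subsingleton, iff_true]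
    omega
  rw [G.maxDegree_eq_card_sub_one_iff]
  refine ⟨fun hB => ?_, fun ⟨u, hu⟩ => bodyguardNumber_eq bodyguardsWin_card_sub_one
    fun k hk => not_bodyguardsWin_of_isUniversal hu hk⟩
  by_contra! hnu
  obtain ⟨v⟩ := ‹Nonempty V›
  obtain ⟨w, hvw, -⟩ : ∃ w, v ≠ w ∧ ¬ G.Adj v w := by simpa [IsUniversal] using hnu v
  have hcard := Fintype.one_lt_card_iff.2 ⟨v, w, hvw⟩
  have := bodyguardNumber_le (bodyguardsWin_card_sub_two hnu)
  omega
end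

section
/- For positive integers n_1 ≤ n_2 ≤ ⋯ ≤ n_k, the bodyguard number of the complete multipartite graph K_{n_1,...,n_k} equals n_2 + n_3 + ⋯ + n_k. -/
/-! A president who never leaves a vertex of the smallest part `i₀` forces the bodyguards onto
all of its `∑ n - n i₀` neighbours. Conversely, that many bodyguards, one per vertex outside
part `i₀`, win with a strategy depending only on the president's position: bodyguard `(i, b)`
stands on its own vertex, except that while the president is in part `i` it steps over to
`(i₀, b)` when that vertex exists; this covers part `i₀` because `n i₀ ≤ n i`. -/

open SimpleGraph

open Finset

section Game

variable {V : Type*} {G : SimpleGraph V}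

theorem stepRel_refl (x : V) : stepRel G x x := Or.inl rfl

theorem gamePlay_succ_fst {k : ℕ} (binit : Fin k → V) (bmove : (Fin k → V) → V → Fin k → V)
    (pinit : (Fin k → V) → V) (pmove : (Fin k → V) → V → V) (m : ℕ) :
    (gamePlay binit bmove pinit pmove (m + 1)).1 =
      bmove (gamePlay binit bmove pinit pmove m).1 (gamePlay binit bmove pinit pmove m).2 :=
  rfl

theorem BodyguardsWin.degree_le {k : ℕ} (h : BodyguardsWin G k) (p : V)
    [Fintype (G.neighborSet p)] : G.degree p ≤ k := by
  classical
  obtain ⟨binit, bmove, -, hwin⟩ := h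
  obtain ⟨N, hN⟩ := hwin (fun _ => p) (fun _ q => q) (fun _ => stepRel_refl)
  have hstill : ∀ m, (gamePlay binit bmove (fun _ => p) (fun _ q => q) m).2 = p := by
    intro m
    induction m with
    | zero => rfl
    | succ m ih => exact ih
  have hguarded : G.neighborFinset p ⊆
      univ.image (gamePlay binit bmove (fun _ => p) (fun _ q => q) (N + 1)).1 := by
    intro v hv
    rw [mem_neighborFinset, ← hstill N] at hv
    simpa using hN N le_rfl v hv
  calc G.degree p = #(G.neighborFinset p) := (card_neighborFinset_eq_degree G p).symm
    _ ≤ k := (card_le_card hguarded).trans (card_image_le.trans (by simp))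

theorem bodyguardsWin_of_forall_stepRel {ι : Type*} [Fintype ι] [Nonempty V] (f : V → ι → V)
    (hstep : ∀ p q i, stepRel G (f p i) (f q i)) (hcover : ∀ p v, G.Adj p v → ∃ i, f p i = v) :
    BodyguardsWin G (Fintype.card ι) := by
  classical
  let e := Fintype.equivFin ι
  let bmove : (Fin (Fintype.card ι) → V) → V → Fin (Fintype.card ι) → V := fun bs p i =>
    if stepRel G (bs i) (f p (e.symm i)) then f p (e.symm i) else bs i
  have hbmove : ∀ p q, bmove (fun i => f q (e.symm i)) p = fun i => f p (e.symm i) := by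
    intro p q
    funext i
    exact if_pos (hstep q p _)
  let binit : Fin (Fintype.card ι) → V := fun i => f (Classical.arbitrary V) (e.symm i)
  refine ⟨binit, bmove, ?_, ?_⟩
  · intro bs p i
    by_cases h : stepRel G (bs i) (f p (e.symm i))
    · simp [bmove, h]
    · simpa [bmove, h] using stepRel_refl (bs i)
  · intro pinit pmove _
    have hpositional :
        ∀ m, ∃ q, (gamePlay binit bmove pinit pmove m).1 = fun i => f q (e.symm i) := by
      intro m
      induction m with
      | zero => exact ⟨_, rfl⟩
      | succ m ih =>
        obtain ⟨q, hq⟩ := ih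
        exact ⟨_, by rw [gamePlay_succ_fst, hq, hbmove]⟩
    refine ⟨0, fun m _ v hv => ?_⟩
    obtain ⟨q, hq⟩ := hpositional m
    obtain ⟨i, rfl⟩ := hcover _ v hv
    refine ⟨e i, ?_⟩
    rw [gamePlay_succ_fst, hq, hbmove]
    exact congrArg _ (e.symm_apply_apply i)

end Game

section CompleteMultipartite

variable {ι : Type*} [Fintype ι] [DecidableEq ι] (n : ι → ℕ)

theorem card_sigma_fst_ne (i₀ : ι) :
    Fintype.card {v : Σ i, Fin (n i) // v.1 ≠ i₀} = (∑ i, n i) - n i₀ := by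
  rw [Fintype.card_subtype_compl, Fintype.card_congr (Equiv.sigmaSubtype i₀)]
  simp

theorem degree_completeMultipartiteGraph (v : Σ i, Fin (n i)) :
    (completeMultipartiteGraph fun i => Fin (n i)).degree v = (∑ i, n i) - n v.1 := by
  rw [← card_neighborSet_eq_degree, ← card_sigma_fst_ne]
  exact Fintype.card_congr (Equiv.subtypeEquivRight fun w => by simp [ne_comm])

theorem bodyguardsWin_completeMultipartiteGraph [Nonempty (Σ i, Fin (n i))] (i₀ : ι)
    (hmin : ∀ i, n i₀ ≤ n i) :
    BodyguardsWin (completeMultipartiteGraph fun i => Fin (n i)) ((∑ i, n i) - n i₀) := by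
  rw [← card_sigma_fst_ne]
  refine bodyguardsWin_of_forall_stepRel (fun p (j : {v : Σ i, Fin (n i) // v.1 ≠ i₀}) =>
    if h : p.1 = j.1.1 ∧ (j.1.2 : ℕ) < n i₀ then ⟨i₀, ⟨j.1.2, h.2⟩⟩ else j.1) ?_ ?_
  · intro p q j
    split_ifs
    · exact stepRel_refl _
    · exact Or.inr j.2.symm
    · exact Or.inr j.2
    · exact stepRel_refl _
  · rintro p ⟨i, b⟩ (hpv : p.1 ≠ i)
    by_cases hi : i = i₀
    · subst hi
      exact ⟨⟨⟨p.1, ⟨b, b.2.trans_le (hmin p.1)⟩⟩, hpv⟩, dif_pos ⟨rfl, b.2⟩⟩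
    · exact ⟨⟨⟨i, b⟩, hi⟩, dif_neg fun h => hpv h.1⟩

end CompleteMultipartite

/-- For positive integers `n 0 ≤ n 1 ≤ ⋯ ≤ n (k-1)`, the bodyguard number of the complete
multipartite graph with part sizes `n i` equals the sum of all part sizes except the
smallest one. -/
theorem bodyguardNumber_completeMultipartiteGraph (k : ℕ) (hk : 0 < k) (n : Fin k → ℕ)
    (hpos : ∀ i, 0 < n i) (hmono : Monotone n) :
    bodyguardNumber (completeMultipartiteGraph fun i => Fin (n i)) =
      (∑ i, n i) - n ⟨0, hk⟩ := by
  have hmin : ∀ i, n ⟨0, hk⟩ ≤ n i :=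
    fun i => hmono (show (⟨0, hk⟩ : Fin k) ≤ i from Nat.zero_le _)
  let p₀ : Σ i, Fin (n i) := ⟨⟨0, hk⟩, ⟨0, hpos _⟩⟩
  have : Nonempty (Σ i, Fin (n i)) := ⟨p₀⟩
  refine IsLeast.csInf_eq ⟨bodyguardsWin_completeMultipartiteGraph n _ hmin, fun m hm => ?_⟩
  simpa only [degree_completeMultipartiteGraph] using hm.degree_le p₀
end

section
/- If T is a tree on at least three vertices with ℓ leaves, then B(T) = ℓ. -/
open SimpleGraph

/-!
Upper bound: put one guard on each leaf `r`; its target is the neighbour of the president on the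
path towards `r`. Walking towards its target, the guard stays on the geodesic from `r` to the
target and gets farther from `r` in every round until it first reaches the target; since the
target moves by at most one step per round, from then on the guard keeps up with it. Every
neighbour of the president is such a target, because every branch of a tree contains a leaf.

Lower bound: with fewer guards than leaves, at a non-leaf vertex some branch contains more leaves
than guards. The president, starting at a non-leaf vertex, always steps into such an
underguarded branch that is not a single leaf, of least size. If the guards cover his
neighbourhood, one of the sub-branches of the branch he entered is again underguarded after
their move, so the size of the chosen branch would decrease strictly forever.
-/

open Finset

lemma stepRel.symm {V : Type*} {G : SimpleGraph V} {x y : V} (h : stepRel G x y) :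
    stepRel G y x :=
  h.imp Eq.symm Adj.symm

lemma Finset.exists_card_filter_lt_card_filter {α β γ : Type*} [DecidableEq β] {s : Finset α}
    {r : Finset γ} (f : α → β) (g : γ → β) (h : #r < #s) :
    ∃ y ∈ s.image f, #{z ∈ r | g z = y} < #{x ∈ s | f x = y} := by
  apply exists_lt_of_sum_lt
  calc ∑ y ∈ s.image f, #{z ∈ r | g z = y}
      = #{z ∈ r | g z ∈ s.image f} := sum_card_fiberwise_eq_card_filter _ _ _
    _ ≤ #r := card_filter_le _ _
    _ < #s := h
    _ = ∑ y ∈ s.image f, #{x ∈ s | f x = y} := card_eq_sum_card_image f s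

namespace SimpleGraph

variable {V : Type*} {G : SimpleGraph V}

lemma Reachable.dist_lt_card [Fintype V] {u v : V} (h : G.Reachable u v) :
    G.dist u v < Fintype.card V := by
  obtain ⟨p, hp, hl⟩ := h.exists_path_of_dist
  exact hl ▸ hp.length_lt

lemma Reachable.exists_adj_dist_add_one_eq {u v : V} (h : G.Reachable u v) (hne : u ≠ v) :
    ∃ w, G.Adj u w ∧ G.dist w v + 1 = G.dist u v := by
  obtain ⟨p, hp⟩ := h.exists_walk_length_eq_dist
  cases p with
  | nil => exact absurd rfl hne
  | cons hadj q =>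
    obtain ⟨q', hq'⟩ := (Walk.reachable q).exists_walk_length_eq_dist
    have h₁ := dist_le q
    have h₂ := dist_le (Walk.cons hadj q')
    simp only [Walk.length_cons] at hp h₂
    exact ⟨_, hadj, by omega⟩

open scoped Classical in
noncomputable def stepToward (G : SimpleGraph V) (u v : V) : V :=
  if h : ∃ w, G.Adj u w ∧ G.dist w v + 1 = G.dist u v then h.choose else u

lemma stepToward_spec {u v : V} (h : G.Reachable u v) (hne : u ≠ v) :
    G.Adj u (G.stepToward u v) ∧ G.dist (G.stepToward u v) v + 1 = G.dist u v := by
  have hex := h.exists_adj_dist_add_one_eq hne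
  classical
  rw [stepToward, dif_pos hex]
  exact hex.choose_spec

@[simp]
lemma stepToward_self (u : V) : G.stepToward u u = u := by
  simp [stepToward]

lemma stepRel_stepToward {u v : V} (h : G.Reachable u v) : stepRel G u (G.stepToward u v) := by
  rcases eq_or_ne u v with rfl | hne
  · exact Or.inl (stepToward_self u).symm
  · exact Or.inr (stepToward_spec h hne).1

lemma IsAcyclic.eq_of_adj_of_dist_add_one_eq (hG : G.IsAcyclic) {u v w w' : V}
    (hw : G.Adj u w) (hw' : G.Adj u w') (hd : G.dist w v + 1 = G.dist u v)
    (hd' : G.dist w' v + 1 = G.dist u v) : w = w' := by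
  have huv : G.Reachable u v := Reachable.of_dist_ne_zero (by omega)
  obtain ⟨q, hq⟩ := (hw.symm.reachable.trans huv).exists_walk_length_eq_dist
  obtain ⟨q', hq'⟩ := (hw'.symm.reachable.trans huv).exists_walk_length_eq_dist
  have hp := (Walk.cons hw q).isPath_of_length_eq_dist (by simp [hq, hd])
  have hp' := (Walk.cons hw' q').isPath_of_length_eq_dist (by simp [hq', hd'])
  simpa using congrArg (fun p : G.Path u v => p.1.snd)
    ((hG.subsingleton_path u v).elim ⟨_, hp⟩ ⟨_, hp'⟩)

lemma IsAcyclic.stepToward_eq (hG : G.IsAcyclic) {u v w : V} (hw : G.Adj u w)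
    (hd : G.dist w v + 1 = G.dist u v) : G.stepToward u v = w := by
  have hne : u ≠ v := by rintro rfl; simp at hd
  have huv : G.dist u v ≠ 0 := by omega
  obtain ⟨hadj, hdist⟩ := stepToward_spec (Reachable.of_dist_ne_zero huv) hne
  exact hG.eq_of_adj_of_dist_add_one_eq hadj hw hdist hd

lemma IsAcyclic.stepToward_of_stepRel (hG : G.IsAcyclic) {u v : V} (h : stepRel G u v) :
    G.stepToward u v = v := by
  rcases h with rfl | hadj
  · exact stepToward_self u
  · exact hG.stepToward_eq hadj (by simp [dist_eq_one_iff_adj.2 hadj])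

lemma IsTree.stepToward_eq_of_adj (hT : G.IsTree) {p x y : V} (hxy : G.Adj x y) (hx : x ≠ p)
    (hy : y ≠ p) : G.stepToward p x = G.stepToward p y := by
  wlog h : G.dist p y = G.dist p x + 1 generalizing x y
  · exact (this hxy.symm hy hx ((hT.dist_eq_dist_add_one_of_adj p hxy).resolve_right h)).symm
  obtain ⟨hs, hsd⟩ := stepToward_spec (hT.connected p x) hx.symm
  have h₁ : G.dist (G.stepToward p x) y ≤ _ + _ := hT.connected.dist_triangle (v := x)
  have h₂ : G.dist p y ≤ _ + _ := hT.connected.dist_triangle (v := G.stepToward p x)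
  rw [dist_eq_one_iff_adj.2 hxy] at h₁
  rw [dist_eq_one_iff_adj.2 hs] at h₂
  exact (hT.isAcyclic.stepToward_eq hs (by omega)).symm

section Branch

variable [Fintype V] [DecidableEq V]

/-- In a tree, the component of `G - p` containing the neighbour `u` of `p`. -/
noncomputable def branch (G : SimpleGraph V) (p u : V) : Finset V :=
  {x | x ≠ p ∧ G.stepToward p x = u}

lemma mem_branch {p u x : V} : x ∈ G.branch p u ↔ x ≠ p ∧ G.stepToward p x = u := by
  simp [branch]

lemma IsAcyclic.mem_branch_self (hG : G.IsAcyclic) {p u : V} (hpu : G.Adj p u) :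
    u ∈ G.branch p u :=
  mem_branch.2 ⟨hpu.ne.symm, hG.stepToward_of_stepRel (Or.inr hpu)⟩

lemma Connected.stepToward_ne_of_mem_branch (hG : G.Connected) {p u x : V}
    (hx : x ∈ G.branch p u) (hxu : x ≠ u) : G.stepToward u x ≠ p := by
  intro h
  obtain ⟨hxp, rfl⟩ := mem_branch.1 hx
  have h₁ := (stepToward_spec (hG p x) hxp.symm).2
  have h₂ := (stepToward_spec (hG _ x) hxu.symm).2
  rw [h] at h₂
  omega

lemma IsTree.branch_subset (hT : G.IsTree) {p u w : V} (hpu : G.Adj p u) (hwp : w ≠ p) :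
    G.branch u w ⊆ G.branch p u := by
  intro x hx
  obtain ⟨hxu, hw⟩ := mem_branch.1 hx
  rcases hT.dist_eq_dist_add_one_of_adj x hpu with hd | hd
  · have hxp : x ≠ p := by rintro rfl; simp at hd
    exact mem_branch.2 ⟨hxp, hT.isAcyclic.stepToward_eq hpu (by
      rw [dist_comm, dist_comm (u := p)]; omega)⟩
  · exact absurd (hT.isAcyclic.stepToward_eq hpu.symm (by
      rw [dist_comm, dist_comm (u := u)]; omega)) (hw ▸ hwp)

lemma IsTree.card_branch_lt (hT : G.IsTree) {p u w : V} (hpu : G.Adj p u) (hwp : w ≠ p) :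
    #(G.branch u w) < #(G.branch p u) :=
  card_lt_card <| (ssubset_iff_of_subset (hT.branch_subset hpu hwp)).2
    ⟨u, hT.isAcyclic.mem_branch_self hpu, fun h => (mem_branch.1 h).1 rfl⟩

lemma IsTree.mem_branch_of_adj (hT : G.IsTree) {p u x y : V} (hx : x ∈ G.branch p u)
    (hxy : G.Adj x y) (hy : y ≠ p) : y ∈ G.branch p u := by
  obtain ⟨hxp, hxu⟩ := mem_branch.1 hx
  exact mem_branch.2 ⟨hy, hT.stepToward_eq_of_adj hxy hxp hy ▸ hxu⟩

/-- A guard can only enter `branch u w` from `u`, and `u` itself lies in `branch p u`. -/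
lemma IsTree.mem_branch_of_stepRel (hT : G.IsTree) {p u w x y : V} (hpu : G.Adj p u)
    (hwp : w ≠ p) (hy : y ∈ G.branch u w) (hxy : stepRel G x y) : x ∈ G.branch p u := by
  have hy' := hT.branch_subset hpu hwp hy
  rcases hxy with rfl | hxy
  · exact hy'
  by_cases hxp : x = p
  · subst hxp
    have hyu := (mem_branch.1 hy').2
    exact absurd (hyu ▸ hT.isAcyclic.stepToward_of_stepRel (Or.inr hxy)).symm (mem_branch.1 hy).1
  · exact hT.mem_branch_of_adj hy' hxy.symm hxp

lemma IsTree.exists_mem_branch_degree_eq_one [DecidableRel G.Adj] (hT : G.IsTree) {p v : V}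
    (hpv : G.Adj p v) : ∃ ℓ ∈ G.branch p v, G.degree ℓ = 1 := by
  obtain ⟨x, hx, hmax⟩ := exists_max_image (G.branch p v) (G.dist p)
    ⟨v, hT.isAcyclic.mem_branch_self hpv⟩
  have hxp := (mem_branch.1 hx).1
  refine ⟨x, hx, degree_eq_one_iff_existsUnique_adj.2 ⟨G.stepToward x p,
    (stepToward_spec (hT.connected x p) hxp).1, fun y hxy => ?_⟩⟩
  rcases hT.dist_eq_dist_add_one_of_adj p hxy with hd | hd
  · exact (hT.isAcyclic.stepToward_eq hxy (by rw [dist_comm, dist_comm (u := x)]; omega)).symm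
  · have hy : y ≠ p := by rintro rfl; simp at hd
    have := hmax y (hT.mem_branch_of_adj hx hxy hy)
    omega

end Branch

def Between (G : SimpleGraph V) (r x y : V) : Prop := G.dist r x + G.dist x y = G.dist r y

lemma between_self_left (r y : V) : G.Between r r y := by
  simp [Between]

lemma Connected.between_stepToward (hG : G.Connected) (r p : V) :
    G.Between r (G.stepToward p r) p := by
  rcases eq_or_ne p r with rfl | hne
  · simp [Between]
  obtain ⟨hadj, hd⟩ := stepToward_spec (hG p r) hne
  have h₁ : G.dist r (G.stepToward p r) = _ := dist_comm
  have h₂ : G.dist r p = _ := dist_comm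
  rw [Between, dist_eq_one_iff_adj.2 hadj.symm]
  omega

lemma Connected.between_trans (hG : G.Connected) {r x y z : V} (h₁ : G.Between r x y)
    (h₂ : G.Between r y z) : G.Between r x z := by
  have : G.dist x z ≤ _ + _ := hG.dist_triangle (v := y)
  have : G.dist r z ≤ _ + _ := hG.dist_triangle (v := x)
  unfold Between at *
  omega

lemma Connected.stepToward_eq_or_between (hG : G.Connected) {r g x : V}
    (h : G.Between r g x) :
    G.stepToward g x = x ∨
      G.Between r (G.stepToward g x) x ∧ G.dist r (G.stepToward g x) = G.dist r g + 1 := by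
  rcases eq_or_ne g x with rfl | hne
  · exact Or.inl (stepToward_self g)
  right
  obtain ⟨hadj, hd⟩ := stepToward_spec (hG g x) hne
  have h₁ : G.dist r (G.stepToward g x) ≤ _ + _ := hG.dist_triangle (v := g)
  have h₂ : G.dist r x ≤ _ + _ := hG.dist_triangle (v := G.stepToward g x)
  rw [dist_eq_one_iff_adj.2 hadj] at h₁
  unfold Between at *
  omega

lemma IsTree.between_stepToward_of_ne (hT : G.IsTree) {r g x : V} (h : G.Between r g x)
    (hne : g ≠ x) : G.Between r g (G.stepToward x r) := by
  obtain ⟨hadj, hd⟩ := stepToward_spec (hT.connected x g) hne.symm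
  set c := G.stepToward x g
  have h₁ : G.dist r c ≤ _ + _ := hT.connected.dist_triangle (v := g)
  have h₂ : G.dist r x ≤ _ + _ := hT.connected.dist_triangle (v := c)
  have e₁ : G.dist g c = G.dist c g := dist_comm
  have e₂ : G.dist x g = G.dist g x := dist_comm
  rw [dist_eq_one_iff_adj.2 hadj.symm] at h₂
  unfold Between at *
  have hc : G.stepToward x r = c := hT.isAcyclic.stepToward_eq hadj (by
    rw [dist_comm, dist_comm (u := x)]; omega)
  rw [hc]
  omega

lemma IsTree.between_stepToward_of_stepRel (hT : G.IsTree) {r g p p' : V}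
    (h : G.Between r g (G.stepToward p r)) (hg : g ≠ G.stepToward p r) (hp : stepRel G p p') :
    G.Between r g (G.stepToward p' r) := by
  rcases hp with rfl | hadj
  · exact h
  rcases hT.dist_eq_dist_add_one_of_adj r hadj with hd | hd
  · have hs : G.stepToward p r = p' := hT.isAcyclic.stepToward_eq hadj (by
      rw [dist_comm, dist_comm (u := p)]; omega)
    rw [hs] at h hg
    exact hT.between_stepToward_of_ne h hg
  · have hs : G.stepToward p' r = p := hT.isAcyclic.stepToward_eq hadj.symm (by
      rw [dist_comm, dist_comm (u := p')]; omega)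
    rw [hs]
    exact hT.connected.between_trans h (hT.connected.between_stepToward r p)

lemma IsTree.stepRel_stepToward_stepToward (hT : G.IsTree) (r : V) {p p' : V}
    (hp : stepRel G p p') : stepRel G (G.stepToward p r) (G.stepToward p' r) := by
  rcases hp with rfl | hadj
  · exact Or.inl rfl
  rcases hT.dist_eq_dist_add_one_of_adj r hadj with hd | hd
  · rw [hT.isAcyclic.stepToward_eq hadj (by rw [dist_comm, dist_comm (u := p)]; omega)]
    exact stepRel_stepToward (hT.connected _ _)
  · rw [hT.isAcyclic.stepToward_eq hadj.symm (by rw [dist_comm, dist_comm (u := p')]; omega)]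
    exact (stepRel_stepToward (hT.connected _ _)).symm

noncomputable def shadowMove (G : SimpleGraph V) {k : ℕ} (r bs : Fin k → V) (p : V) :
    Fin k → V :=
  fun i => G.stepToward (bs i) (G.stepToward p (r i))

lemma IsTree.eq_stepToward_of_card_le [Fintype V] (hT : G.IsTree) {r : V} {p g : ℕ → V}
    (hp : ∀ n, stepRel G (p n) (p (n + 1))) (hg₀ : g 0 = r)
    (hg : ∀ n, g (n + 1) = G.stepToward (g n) (G.stepToward (p n) r)) {n : ℕ}
    (hn : Fintype.card V ≤ n) : g (n + 1) = G.stepToward (p n) r := by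
  have key : ∀ n, g (n + 1) = G.stepToward (p n) r ∨
      G.Between r (g (n + 1)) (G.stepToward (p n) r) ∧ n + 1 ≤ G.dist r (g (n + 1)) := by
    intro n
    induction n with
    | zero =>
      rw [hg, hg₀]
      rcases hT.connected.stepToward_eq_or_between (between_self_left r _) with h | ⟨h, hd⟩
      · exact Or.inl h
      · exact Or.inr ⟨h, by simp [hd]⟩
    | succ n ih =>
      rw [hg]
      by_cases hc : g (n + 1) = G.stepToward (p n) r
      · rw [hc]
        exact Or.inl <| hT.isAcyclic.stepToward_of_stepRel <|
          hT.stepRel_stepToward_stepToward r (hp n)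
      obtain ⟨hb, hd⟩ := ih.resolve_left hc
      rcases hT.connected.stepToward_eq_or_between
          (hT.between_stepToward_of_stepRel hb hc (hp n)) with h | ⟨h, hd'⟩
      · exact Or.inl h
      · exact Or.inr ⟨h, by omega⟩
  have hlt := (hT.connected r (g (n + 1))).dist_lt_card
  exact (key n).resolve_right fun h => by omega

lemma IsTree.gamePlay_shadowMove_of_card_le [Fintype V] (hT : G.IsTree) {k : ℕ} (r : Fin k → V)
    (pinit : (Fin k → V) → V) (pmove : (Fin k → V) → V → V)
    (hpmove : ∀ bs p, stepRel G p (pmove bs p)) {n : ℕ} (hn : Fintype.card V ≤ n)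
    (i : Fin k) :
    (gamePlay r (G.shadowMove r) pinit pmove (n + 1)).1 i =
      G.stepToward (gamePlay r (G.shadowMove r) pinit pmove n).2 (r i) :=
  hT.eq_stepToward_of_card_le (g := fun n => (gamePlay r (G.shadowMove r) pinit pmove n).1 i)
    (fun _ => hpmove _ _) rfl (fun _ => rfl) hn

theorem IsTree.bodyguardsWin_card_leaves [Fintype V] [DecidableRel G.Adj] (hT : G.IsTree) :
    BodyguardsWin G #{v | G.degree v = 1} := by
  set e := ({v | G.degree v = 1} : Finset V).equivFin
  refine ⟨fun i => e.symm i, G.shadowMove fun i => e.symm i,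
    fun bs p i => stepRel_stepToward (hT.connected _ _),
    fun pinit pmove hpmove => ⟨Fintype.card V, fun n hn v hv => ?_⟩⟩
  classical
  obtain ⟨ℓ, hℓv, hℓ⟩ := hT.exists_mem_branch_degree_eq_one hv
  obtain ⟨-, rfl⟩ := mem_branch.1 hℓv
  refine ⟨e ⟨ℓ, by simpa using hℓ⟩, ?_⟩
  rw [hT.gamePlay_shadowMove_of_card_le _ _ _ hpmove hn]
  simp


section Underguarded

variable [Fintype V] [DecidableEq V] [DecidableRel G.Adj] {k : ℕ}

def Underguarded (G : SimpleGraph V) [DecidableRel G.Adj] (b : Fin k → V) (p u : V) : Prop :=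
  #{i | b i ∈ G.branch p u} < #{x ∈ G.branch p u | G.degree x = 1}

lemma IsTree.exists_underguarded (hT : G.IsTree) (b : Fin k → V) {p : V} (hp : G.degree p ≠ 1)
    (hk : k < #{v | G.degree v = 1}) : ∃ u, G.Adj p u ∧ G.Underguarded b p u := by
  obtain ⟨u, hu, hlt⟩ := exists_card_filter_lt_card_filter (r := {i | b i ≠ p})
    (G.stepToward p) (fun i => G.stepToward p (b i))
    ((card_filter_le _ _).trans_lt (by simpa using hk))
  obtain ⟨ℓ, hℓ, rfl⟩ := mem_image.1 hu
  have hℓp : ℓ ≠ p := by rintro rfl; exact hp (mem_filter.1 hℓ).2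
  refine ⟨_, (stepToward_spec (hT.connected p ℓ) hℓp.symm).1, ?_⟩
  calc #{i | b i ∈ G.branch p _}
      ≤ #{i ∈ {i | b i ≠ p} | G.stepToward p (b i) = G.stepToward p ℓ} :=
        card_le_card fun i => by simp [mem_branch]
    _ < _ := hlt
    _ ≤ _ := card_le_card fun x => by
        simp only [mem_filter, mem_univ, true_and, mem_branch]
        exact fun ⟨hx, hxu⟩ => ⟨⟨fun h => hp (h ▸ hx), hxu⟩, hx⟩

lemma IsTree.exists_underguarded_of_stepRel (hT : G.IsTree) {b b' : Fin k → V} {p u : V}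
    (hpu : G.Adj p u) (hu : G.degree u ≠ 1) (hb : G.Underguarded b p u)
    (hbb' : ∀ i, stepRel G (b i) (b' i)) :
    ∃ w, G.Adj u w ∧ w ≠ p ∧ G.Underguarded b' u w := by
  have hr : #{i | b' i ≠ u ∧ G.stepToward u (b' i) ≠ p} ≤ #{i | b i ∈ G.branch p u} :=
    card_le_card fun i => by
      simp only [mem_filter, mem_univ, true_and]
      exact fun ⟨hiu, hip⟩ =>
        hT.mem_branch_of_stepRel hpu hip (mem_branch.2 ⟨hiu, rfl⟩) (hbb' i)
  obtain ⟨w, hw, hlt⟩ := exists_card_filter_lt_card_filter (G.stepToward u)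
    (fun i => G.stepToward u (b' i)) (hr.trans_lt hb)
  obtain ⟨x, hx, rfl⟩ := mem_image.1 hw
  obtain ⟨hxb, hx1⟩ := mem_filter.1 hx
  have hxu : x ≠ u := by rintro rfl; exact hu hx1
  have hwp := hT.connected.stepToward_ne_of_mem_branch hxb hxu
  refine ⟨_, (stepToward_spec (hT.connected u x) hxu.symm).1, hwp, ?_⟩
  calc #{i | b' i ∈ G.branch u _}
      ≤ #{i ∈ {i | b' i ≠ u ∧ G.stepToward u (b' i) ≠ p} |
          G.stepToward u (b' i) = G.stepToward u x} :=
        card_le_card fun i => by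
          simp only [mem_filter, mem_univ, true_and, mem_branch]
          exact fun ⟨hiu, hiw⟩ => ⟨⟨hiu, hiw ▸ hwp⟩, hiw⟩
    _ < _ := hlt
    _ ≤ _ := card_le_card fun y => by
        simp only [mem_filter, mem_branch]
        exact fun ⟨⟨⟨_, _⟩, hy1⟩, hyw⟩ => ⟨⟨fun h => hu (h ▸ hy1), hyw⟩, hy1⟩

lemma IsTree.not_underguarded_of_degree_eq_one (hT : G.IsTree) {b : Fin k → V} {p u : V}
    (hpu : G.Adj p u) (hu : G.degree u = 1) (hb : ∃ i, b i = u) : ¬ G.Underguarded b p u := by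
  obtain ⟨i, hi⟩ := hb
  have hleaves : {x ∈ G.branch p u | G.degree x = 1} ⊆ {u} := fun x hx => by
    by_contra hxu
    have hx := (mem_filter.1 hx).1
    have hxu : x ≠ u := by simpa using hxu
    obtain ⟨_, -, huniq⟩ := degree_eq_one_iff_existsUnique_adj.1 hu
    exact hT.connected.stepToward_ne_of_mem_branch hx hxu <|
      (huniq _ (stepToward_spec (hT.connected u x) hxu.symm).1).trans (huniq p hpu.symm).symm
  have hguard : 0 < #{j | b j ∈ G.branch p u} :=
    card_pos.2 ⟨i, by simpa [hi] using hT.isAcyclic.mem_branch_self hpu⟩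
  have := card_le_card hleaves
  simp only [card_singleton] at this
  exact fun h => by unfold Underguarded at h; omega

end Underguarded

section President

variable [Fintype V] [DecidableEq V] [DecidableRel G.Adj] {k : ℕ}

def escapes (G : SimpleGraph V) [DecidableRel G.Adj] (b : Fin k → V) (p : V) : Set V :=
  {u | G.Adj p u ∧ G.Underguarded b p u ∧ G.degree u ≠ 1}

open scoped Classical in
noncomputable def presidentMove (G : SimpleGraph V) [DecidableRel G.Adj] (b : Fin k → V)
    (p : V) : V :=
  if h : (G.escapes b p).Nonempty then Function.argminOn (fun u => #(G.branch p u)) _ h else p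

lemma presidentMove_spec {b : Fin k → V} {p : V} (h : (G.escapes b p).Nonempty) :
    G.presidentMove b p ∈ G.escapes b p ∧
      ∀ u ∈ G.escapes b p, #(G.branch p (G.presidentMove b p)) ≤ #(G.branch p u) := by
  rw [presidentMove, dif_pos h]
  exact ⟨Function.argminOn_mem _ _ h,
    fun u hu => Function.argminOn_le (fun u => #(G.branch p u)) _ hu⟩

lemma stepRel_presidentMove (b : Fin k → V) (p : V) : stepRel G p (G.presidentMove b p) := by
  by_cases h : (G.escapes b p).Nonempty
  · exact Or.inr (presidentMove_spec h).1.1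
  · rw [presidentMove, dif_neg h]
    exact Or.inl rfl

lemma degree_presidentMove_ne_one {b : Fin k → V} {p : V} (hp : G.degree p ≠ 1) :
    G.degree (G.presidentMove b p) ≠ 1 := by
  by_cases h : (G.escapes b p).Nonempty
  · exact (presidentMove_spec h).1.2.2
  · rwa [presidentMove, dif_neg h]

lemma IsTree.escapes_nonempty (hT : G.IsTree) {b : Fin k → V} {p : V} (hp : G.degree p ≠ 1)
    (hk : k < #{v | G.degree v = 1}) (hcov : ∀ v, G.Adj p v → ∃ i, b i = v) :
    (G.escapes b p).Nonempty := by
  obtain ⟨u, hpu, hu⟩ := hT.exists_underguarded b hp hk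
  exact ⟨u, hpu, hu, fun h => hT.not_underguarded_of_degree_eq_one hpu h (hcov u hpu) hu⟩

lemma IsTree.exists_mem_escapes_card_branch_lt (hT : G.IsTree) {b b' : Fin k → V} {p u : V}
    (hu : u ∈ G.escapes b p) (hbb' : ∀ i, stepRel G (b i) (b' i))
    (hcov : ∀ v, G.Adj u v → ∃ i, b' i = v) :
    ∃ w ∈ G.escapes b' u, #(G.branch u w) < #(G.branch p u) := by
  obtain ⟨hpu, hb, hu⟩ := hu
  obtain ⟨w, huw, hwp, hw⟩ := hT.exists_underguarded_of_stepRel hpu hu hb hbb'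
  exact ⟨w, ⟨huw, hw, fun h => hT.not_underguarded_of_degree_eq_one huw h (hcov w huw) hw⟩,
    hT.card_branch_lt hpu hwp⟩

end President

lemma IsTree.exists_degree_ne_one [Fintype V] [DecidableRel G.Adj] (hT : G.IsTree)
    (h3 : 3 ≤ Fintype.card V) : ∃ v, G.degree v ≠ 1 := by
  classical
  by_contra! h
  have h₁ := G.sum_degrees_eq_twice_card_edges
  have h₂ := hT.card_edgeFinset
  simp only [h, sum_const, card_univ, smul_eq_mul, mul_one] at h₁
  omega

theorem IsTree.not_bodyguardsWin [Fintype V] [DecidableRel G.Adj] (hT : G.IsTree)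
    (h3 : 3 ≤ Fintype.card V) {k : ℕ} (hk : k < #{v | G.degree v = 1}) :
    ¬ BodyguardsWin G k := by
  classical
  rintro ⟨binit, bmove, hbmove, hwin⟩
  obtain ⟨p₀, hp₀⟩ := hT.exists_degree_ne_one h3
  obtain ⟨N, hN⟩ := hwin (fun _ => p₀) G.presidentMove (fun _ _ => stepRel_presidentMove _ _)
  set play := gamePlay binit bmove (fun _ => p₀) G.presidentMove
  have hleaf : ∀ n, G.degree (play n).2 ≠ 1 := by
    intro n
    induction n with
    | zero => exact hp₀
    | succ n ih => exact degree_presidentMove_ne_one ih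
  have hspec : ∀ n, N ≤ n → _ := fun n hn =>
    presidentMove_spec (hT.escapes_nonempty (hleaf n) hk (hN n hn))
  obtain ⟨n, hn⟩ := WellFounded.not_rel_apply_succ (r := (· < ·))
    fun j => #(G.branch (play (N + j)).2 (play (N + j + 1)).2)
  obtain ⟨w, hw, hlt⟩ := hT.exists_mem_escapes_card_branch_lt (hspec (N + n) (by omega)).1
    (fun i => hbmove _ _ i) (hN (N + n + 1) (by omega))
  exact hn (((hspec (N + n + 1) (by omega)).2 w hw).trans_lt hlt)

end SimpleGraph

theorem bodyguardNumber_tree_general {V : Type*} [Fintype V] (G : SimpleGraph V)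
    [DecidableRel G.Adj] (hT : G.IsTree) (h3 : 3 ≤ Fintype.card V) :
    bodyguardNumber G = (Finset.univ.filter fun v => G.degree v = 1).card := by
  have hwin := hT.bodyguardsWin_card_leaves
  refine le_antisymm (Nat.sInf_le hwin) (le_csInf ⟨_, hwin⟩ fun k hk => ?_)
  by_contra! hlt
  exact hT.not_bodyguardsWin h3 hlt hk

/-- If `T` is a tree on at least three vertices with `ℓ` leaves, then `B(T) = ℓ`. -/
theorem bodyguardNumber_tree {V : Type*} [Fintype V] [DecidableEq V] (G : SimpleGraph V)
    [DecidableRel G.Adj] (hT : G.IsTree) (h3 : 3 ≤ Fintype.card V) :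
    bodyguardNumber G = (Finset.univ.filter fun v => G.degree v = 1).card :=
  bodyguardNumber_tree_general G hT h3
end

section
/- For a connected graph G, B(G) = 1 if and only if G is isomorphic to the path P_2 (a single edge). -/
open SimpleGraph

/-!
A president who never moves forces the bodyguards to occupy his whole neighbourhood at once, so
`k` bodyguards can only win if every neighbourhood has at most `k` vertices. Hence one bodyguard
winning while zero lose means every vertex has at most one neighbour and there is an edge, and a
connected such graph is a single edge. Conversely, on `K₂` a single bodyguard wins by always
moving to the vertex the president is not on, and winning is invariant under isomorphism.
-/

theorem Nat.sInf_eq_one_iff {s : Set ℕ} : sInf s = 1 ↔ 1 ∈ s ∧ 0 ∉ s := by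
  constructor
  · intro h
    have hs : s.Nonempty := Set.nonempty_iff_ne_empty.mpr fun he => by simp [he] at h
    refine ⟨h ▸ Nat.sInf_mem hs, fun h0 => ?_⟩
    simp [Nat.sInf_eq_zero.mpr (Or.inl h0)] at h
  · rintro ⟨h1, h0⟩
    refine le_antisymm (Nat.sInf_le h1) (Nat.one_le_iff_ne_zero.mpr fun hz => ?_)
    rcases Nat.sInf_eq_zero.mp hz with h | rfl
    · exact h0 h
    · exact h1

section Game

variable {V W : Type*} {G : SimpleGraph V} {H : SimpleGraph W}

theorem stepRel_equiv_iff (f : V ≃ W) (hf : ∀ x y, H.Adj (f x) (f y) ↔ G.Adj x y) {x y : V} :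
    stepRel H (f x) (f y) ↔ stepRel G x y := by
  simp [stepRel, hf]

theorem gamePlay_map_equiv {k : ℕ} (f : V ≃ W) (binit : Fin k → V)
    (bmove : (Fin k → V) → V → Fin k → V) (pinit : (Fin k → V) → V)
    (pmove : (Fin k → V) → V → V) (n : ℕ) :
    gamePlay (f ∘ binit) (fun bs p => f ∘ bmove (f.symm ∘ bs) (f.symm p))
        (fun bs => f (pinit (f.symm ∘ bs))) (fun bs p => f (pmove (f.symm ∘ bs) (f.symm p))) n =
      Prod.map (f ∘ ·) f (gamePlay binit bmove pinit pmove n) := by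
  induction n with
  | zero => simp [gamePlay, Function.comp_def]
  | succ n ih =>
    rw [gamePlay, gamePlay, ih]
    simp [Function.comp_def]

theorem BodyguardsWin.of_equiv {k : ℕ} (f : V ≃ W) (hf : ∀ x y, H.Adj (f x) (f y) ↔ G.Adj x y)
    (h : BodyguardsWin G k) : BodyguardsWin H k := by
  obtain ⟨binit, bmove, hstep, hwin⟩ := h
  refine ⟨f ∘ binit, fun bs p => f ∘ bmove (f.symm ∘ bs) (f.symm p), fun bs p i => ?_, ?_⟩
  · simpa using (stepRel_equiv_iff f hf).mpr (hstep (f.symm ∘ bs) (f.symm p) i)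
  intro pinit pmove hp
  -- the president on `H` is pulled back to `G`, where the given strategy beats him
  let pinitG (bs : Fin k → V) : V := f.symm (pinit (f ∘ bs))
  let pmoveG (bs : Fin k → V) (p : V) : V := f.symm (pmove (f ∘ bs) (f p))
  obtain ⟨N, hN⟩ := hwin pinitG pmoveG fun bs p => by
    simpa [← stepRel_equiv_iff f hf, pmoveG] using hp (f ∘ bs) (f p)
  have hplay (n : ℕ) : gamePlay (f ∘ binit) (fun bs p => f ∘ bmove (f.symm ∘ bs) (f.symm p))
      pinit pmove n = Prod.map (f ∘ ·) f (gamePlay binit bmove pinitG pmoveG n) := by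
    refine Eq.trans ?_ (gamePlay_map_equiv f _ _ _ _ n)
    congr <;> simp [pinitG, pmoveG, Function.comp_def]
  refine ⟨N, fun n hn v hv => ?_⟩
  rw [hplay] at hv ⊢
  obtain ⟨i, hi⟩ := hN n hn (f.symm v) (by simpa [← hf] using hv)
  exact ⟨i, by simp [hi]⟩

theorem SimpleGraph.Iso.bodyguardsWin_iff {k : ℕ} (e : G ≃g H) :
    BodyguardsWin G k ↔ BodyguardsWin H k :=
  ⟨.of_equiv e.toEquiv fun _ _ => e.map_adj_iff,
    .of_equiv e.symm.toEquiv fun _ _ => e.symm.map_adj_iff⟩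

theorem gamePlay_snd_of_stay {k : ℕ} (binit : Fin k → V) (bmove : (Fin k → V) → V → Fin k → V)
    (p : V) (n : ℕ) : (gamePlay binit bmove (fun _ => p) (fun _ q => q) n).2 = p := by
  induction n with
  | zero => rfl
  | succ n ih => simp [gamePlay, ih]

theorem BodyguardsWin.exists_neighborSet_subset_range {k : ℕ} (h : BodyguardsWin G k) (p : V) :
    ∃ bs : Fin k → V, G.neighborSet p ⊆ Set.range bs := by
  obtain ⟨binit, bmove, -, hwin⟩ := h
  obtain ⟨N, hN⟩ := hwin (fun _ => p) (fun _ q => q) fun _ _ => .inl rfl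
  refine ⟨(gamePlay binit bmove (fun _ => p) (fun _ q => q) (N + 1)).1, fun v hv => ?_⟩
  exact hN N le_rfl v (by rwa [gamePlay_snd_of_stay])

theorem bodyguardsWin_zero_iff : BodyguardsWin G 0 ↔ G = ⊥ := by
  refine ⟨fun h => eq_bot_iff_forall_not_adj.mpr fun p v hv => ?_, ?_⟩
  · obtain ⟨bs, hbs⟩ := h.exists_neighborSet_subset_range p
    exact (hbs hv).choose.elim0
  · rintro rfl
    exact ⟨finZeroElim, fun _ _ => finZeroElim, fun _ _ => finZeroElim, fun _ _ _ => ⟨0, by simp⟩⟩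

theorem BodyguardsWin.subsingleton_neighborSet (h : BodyguardsWin G 1) (p : V) :
    (G.neighborSet p).Subsingleton := by
  obtain ⟨bs, hbs⟩ := h.exists_neighborSet_subset_range p
  exact (Set.subsingleton_range bs).anti hbs

theorem bodyguardsWin_top_fin_two : BodyguardsWin (⊤ : SimpleGraph (Fin 2)) 1 := by
  have hother : ∀ p v : Fin 2, p ≠ v → p + 1 = v := by decide
  exact ⟨fun _ => 0, fun _ p _ => p + 1, fun _ _ _ => em _,
    fun _ _ _ => ⟨0, fun _ _ _ hv => ⟨0, hother _ _ hv⟩⟩⟩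

theorem SimpleGraph.Connected.eq_or_eq_of_adj (hc : G.Connected)
    (hG : ∀ x, (G.neighborSet x).Subsingleton) {v w : V} (hvw : G.Adj v w) (x : V) :
    x = v ∨ x = w := by
  induction (reachable_iff_reflTransGen v x).mp (hc v x) with
  | refl => exact .inl rfl
  | tail _ hyz ih =>
    rcases ih with rfl | rfl
    · exact .inr (hG _ hyz hvw)
    · exact .inl (hG _ hyz hvw.symm)

theorem SimpleGraph.Connected.nonempty_iso_pathGraph_two (hc : G.Connected)
    (hG : ∀ x, (G.neighborSet x).Subsingleton) (hne : G ≠ ⊥) :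
    Nonempty (G ≃g pathGraph 2) := by
  obtain ⟨v, w, hvw⟩ := ne_bot_iff_exists_adj.mp hne
  have hcover := hc.eq_or_eq_of_adj hG hvw
  have hcard : Nat.card V = 2 := Nat.card_eq_two_iff.mpr ⟨v, w, hvw.ne, by ext; simp [hcover]⟩
  have : Finite V := Nat.finite_of_card_ne_zero (by simp [hcard])
  obtain rfl : G = ⊤ := by
    ext x y
    rcases hcover x with rfl | rfl <;> rcases hcover y with rfl | rfl <;>
      simp [hvw, hvw.symm, hvw.ne, hvw.ne']
  rw [pathGraph_two_eq_top]
  exact ⟨Iso.completeGraph (Finite.equivFinOfCardEq hcard)⟩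

end Game

/-- For a connected graph `G`, `B(G) = 1` iff `G` is isomorphic to the path `P_2`. -/
theorem bodyguardNumber_eq_one_iff {V : Type*} [Fintype V] (G : SimpleGraph V)
    (hc : G.Connected) :
    bodyguardNumber G = 1 ↔ Nonempty (G ≃g SimpleGraph.pathGraph 2) := by
  rw [bodyguardNumber, Nat.sInf_eq_one_iff, Set.mem_ofPred_eq, Set.mem_ofPred_eq]
  constructor
  · rintro ⟨h1, h0⟩
    exact hc.nonempty_iso_pathGraph_two h1.subsingleton_neighborSet
      (mt bodyguardsWin_zero_iff.mpr h0)
  · rintro ⟨e⟩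
    rw [e.bodyguardsWin_iff, e.bodyguardsWin_iff, pathGraph_two_eq_top, bodyguardsWin_zero_iff]
    exact ⟨bodyguardsWin_top_fin_two, top_ne_bot⟩
end

section
/- For a connected graph G, B(G) = 2 if and only if G is isomorphic to a path P_n with n ≥ 3, or to a cycle C_m with 3 ≤ m ≤ 5. -/
open SimpleGraph

/-!
A president who never moves must eventually have his whole neighbourhood occupied, so the
maximum degree is at most `B(G)`. Hence `B(G) = 2` forces maximum degree `2`, and a connected
graph of maximum degree at most `2` is a path or a cycle, read off from a longest path; paths
on at most two vertices need only one guard.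

On `P_n` (`n ≥ 3`) and on `C_3`, `C_4`, `C_5` two guards win by heading for the two neighbours
of the president (on the path, after catching up with him from the left end). On `C_m` with
`m ≥ 6` the president escapes forever by standing on vertices the guards cannot cover with
their next move: if, after some guard move, they could cover each of `p - 1`, `p`, `p + 1` with
the move after, they must be standing on `p - 1` and `p + 1`, so they could have covered `p`.
-/

lemma SimpleGraph.eq_or_eq_of_adj_of_degree_le_two {V : Type*} {G : SimpleGraph V} [Fintype V]
    [DecidableRel G.Adj] {v a b w : V} (hdeg : G.degree v ≤ 2) (ha : G.Adj v a) (hb : G.Adj v b)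
    (hab : a ≠ b) (hw : G.Adj v w) : w = a ∨ w = b := by
  classical
  by_contra! hne
  have hsub : ({a, b, w} : Finset V) ⊆ G.neighborFinset v := by
    intro x hx
    simp only [Finset.mem_insert, Finset.mem_singleton] at hx
    rcases hx with rfl | rfl | rfl <;> simpa
  have := Finset.card_le_card hsub
  rw [Finset.card_insert_of_notMem (by simp [hab, hne.1.symm]),
    Finset.card_pair hne.2.symm, card_neighborFinset_eq_degree] at this
  omega

lemma SimpleGraph.two_le_degree_of_adj {V : Type*} {G : SimpleGraph V} [Fintype V]
    [DecidableRel G.Adj] {v a b : V} (ha : G.Adj v a) (hb : G.Adj v b) (hab : a ≠ b) :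
    2 ≤ G.degree v := by
  classical
  rw [← card_neighborFinset_eq_degree, ← Finset.card_pair hab]
  exact Finset.card_le_card fun x hx => by
    rcases Finset.mem_insert.mp hx with rfl | hx
    · simpa
    · rw [Finset.mem_singleton.mp hx]; simpa

section Game

variable {V : Type*} {G : SimpleGraph V} {k : ℕ}

instance [DecidableEq V] [DecidableRel G.Adj] : DecidableRel (stepRel G) :=
  fun x y => inferInstanceAs (Decidable (x = y ∨ G.Adj x y))

def Covers (G : SimpleGraph V) (bs : Fin k → V) (p : V) : Prop :=
  ∀ v, G.Adj p v → ∃ i, bs i = v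

def CanCover (G : SimpleGraph V) (bs : Fin k → V) (p : V) : Prop :=
  ∃ bs' : Fin k → V, (∀ i, stepRel G (bs i) (bs' i)) ∧ Covers G bs' p

theorem degree_le_of_bodyguardsWin [Fintype V] [DecidableRel G.Adj] (h : BodyguardsWin G k)
    (v : V) : G.degree v ≤ k := by
  obtain ⟨binit, bmove, -, hwin⟩ := h
  obtain ⟨N, hN⟩ := hwin (fun _ => v) (fun _ p => p) (fun _ _ => Or.inl rfl)
  have hv : ∀ n, (gamePlay binit bmove (fun _ => v) (fun _ p => p) n).2 = v := by
    intro n; induction n with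
    | zero => rfl
    | succ n ih => exact ih
  choose f hf using fun w : G.neighborFinset v =>
    hN N le_rfl w ((hv N).symm ▸ (G.mem_neighborFinset v w).mp w.2)
  calc G.degree v = Fintype.card (G.neighborFinset v) := by
        rw [Fintype.card_coe, card_neighborFinset_eq_degree]
    _ ≤ Fintype.card (Fin k) :=
        Fintype.card_le_of_injective f fun a b hab => Subtype.ext ((hf a).symm.trans (hab ▸ hf b))
    _ = k := Fintype.card_fin k

lemma two_le_of_bodyguardsWin [Fintype V] (h : BodyguardsWin G k) {v a b : V} (ha : G.Adj v a)
    (hb : G.Adj v b) (hab : a ≠ b) : 2 ≤ k := by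
  classical
  exact (two_le_degree_of_adj ha hb hab).trans (degree_le_of_bodyguardsWin h v)

theorem bodyguardsWin_of_ready_or_chase (binit : Fin k → V)
    (bmove : (Fin k → V) → V → Fin k → V) (hlegal : ∀ bs p i, stepRel G (bs i) (bmove bs p i))
    (Ready Chase : (Fin k → V) → V → Prop) (μ : (Fin k → V) → ℕ)
    (hinit : ∀ p, Ready binit p ∨ Chase binit p)
    (hcover : ∀ bs p, Ready bs p → Covers G (bmove bs p) p)
    (hready : ∀ bs p p', Ready bs p → stepRel G p p' → Ready (bmove bs p) p')
    (hchase : ∀ bs p p', Chase bs p → ¬ Ready bs p → stepRel G p p' →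
      (Ready (bmove bs p) p' ∨ Chase (bmove bs p) p') ∧ μ (bmove bs p) < μ bs) :
    BodyguardsWin G k := by
  refine ⟨binit, bmove, hlegal, fun pinit pmove hpmove => ⟨μ binit + 1, ?_⟩⟩
  set play := gamePlay binit bmove pinit pmove
  have hstep : ∀ n, stepRel G (play n).2 (play (n + 1)).2 := fun n => hpmove _ _
  have hinv : ∀ n, Ready (play n).1 (play n).2 ∨
      Chase (play n).1 (play n).2 ∧ μ (play n).1 + n ≤ μ binit := by
    intro n
    induction n with
    | zero => exact (hinit _).imp_right fun h => ⟨h, le_rfl⟩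
    | succ n ih =>
      by_cases hr : Ready (play n).1 (play n).2
      · exact Or.inl (hready _ _ _ hr (hstep n))
      · obtain ⟨hc, hμ⟩ := ih.resolve_left hr
        obtain ⟨hnext, hlt⟩ := hchase _ _ _ hc hr (hstep n)
        have hμ' : μ (play (n + 1)).1 = μ (bmove (play n).1 (play n).2) := rfl
        exact hnext.imp_right fun h => ⟨h, by omega⟩
  intro n hn
  exact hcover _ _ ((hinv n).resolve_right fun h => by omega)

theorem bodyguardsWin_of_invariant (binit : Fin k → V)
    (bmove : (Fin k → V) → V → Fin k → V) (hlegal : ∀ bs p i, stepRel G (bs i) (bmove bs p i))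
    (Ready : (Fin k → V) → V → Prop) (hinit : ∀ p, Ready binit p)
    (hcover : ∀ bs p, Ready bs p → Covers G (bmove bs p) p)
    (hready : ∀ bs p p', Ready bs p → stepRel G p p' → Ready (bmove bs p) p') :
    BodyguardsWin G k :=
  bodyguardsWin_of_ready_or_chase binit bmove hlegal Ready (fun _ _ => False) (fun _ => 0)
    (fun p => Or.inl (hinit p)) hcover hready (fun _ _ _ h => h.elim)

theorem not_bodyguardsWin_of_escape (hstart : ∀ bs : Fin k → V, ∃ p, ¬ CanCover G bs p)
    (hescape : ∀ (bs bs' : Fin k → V) (p : V), (∀ i, stepRel G (bs i) (bs' i)) →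
      ¬ CanCover G bs p → ∃ q, stepRel G p q ∧ ¬ CanCover G bs' q) :
    ¬ BodyguardsWin G k := by
  classical
  rintro ⟨binit, bmove, hlegal, hwin⟩
  choose pinit hpinit using hstart
  have hmove : ∀ (bs : Fin k → V) (p : V), ∃ q, stepRel G p q ∧
      ((∃ q, stepRel G p q ∧ ¬ CanCover G bs q) → ¬ CanCover G bs q) := by
    intro bs p
    by_cases h : ∃ q, stepRel G p q ∧ ¬ CanCover G bs q
    · obtain ⟨q, hq, hsafe⟩ := h
      exact ⟨q, hq, fun _ => hsafe⟩
    · exact ⟨p, Or.inl rfl, fun h' => (h h').elim⟩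
  choose pmove hpmove hpsafe using hmove
  obtain ⟨N, hN⟩ := hwin pinit pmove hpmove
  set play := gamePlay binit bmove pinit pmove
  have hsafe : ∀ n, ¬ CanCover G (play n).1 (play n).2 := by
    intro n
    induction n with
    | zero => exact hpinit binit
    | succ n ih =>
      exact hpsafe _ _ (hescape _ _ _ (hlegal (play n).1 (play n).2) ih)
  exact hsafe N ⟨_, hlegal (play N).1 (play N).2, hN N le_rfl⟩

lemma CanCover.two_guards {bs : Fin 2 → V} {q u w : V}
    (h : CanCover G bs q) (hu : G.Adj q u) (hw : G.Adj q w) (huw : u ≠ w) :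
    (stepRel G (bs 0) u ∧ stepRel G (bs 1) w) ∨ (stepRel G (bs 0) w ∧ stepRel G (bs 1) u) := by
  obtain ⟨bs', hstep, hcov⟩ := h
  obtain ⟨i, rfl⟩ := hcov u hu
  obtain ⟨j, rfl⟩ := hcov w hw
  fin_cases i <;> fin_cases j
  exacts [(huw rfl).elim, Or.inl ⟨hstep 0, hstep 1⟩, Or.inr ⟨hstep 0, hstep 1⟩, (huw rfl).elim]

end Game

section Iso

variable {V W : Type*} {G : SimpleGraph V} {H : SimpleGraph W} {k : ℕ}

lemma stepRel_iso_iff (e : G ≃g H) {x y : V} : stepRel H (e x) (e y) ↔ stepRel G x y := by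
  simp only [stepRel, e.injective.eq_iff, e.map_adj_iff]

lemma Covers.map (e : G ≃g H) {bs : Fin k → V} {p : V} (h : Covers G bs p) :
    Covers H (e ∘ bs) (e p) := by
  intro w hw
  obtain ⟨i, hi⟩ := h (e.symm w) (by simpa using e.symm.map_adj_iff.mpr hw)
  exact ⟨i, by simp [hi]⟩

lemma canCover_iso_iff (e : G ≃g H) {bs : Fin k → V} {p : V} :
    CanCover H (e ∘ bs) (e p) ↔ CanCover G bs p := by
  constructor
  · rintro ⟨bs', hstep, hcov⟩
    refine ⟨e.symm ∘ bs', fun i => ?_, by simpa using hcov.map e.symm⟩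
    simpa using (stepRel_iso_iff e.symm).mpr (hstep i)
  · rintro ⟨bs', hstep, hcov⟩
    exact ⟨e ∘ bs', fun i => (stepRel_iso_iff e).mpr (hstep i), hcov.map e⟩

lemma gamePlay_conj (e : G ≃g H) (binit : Fin k → W) (bmove : (Fin k → W) → W → Fin k → W)
    (pinit : (Fin k → V) → V) (pmove : (Fin k → V) → V → V) (n : ℕ) :
    gamePlay (e.symm ∘ binit) (fun bs p => e.symm ∘ bmove (e ∘ bs) (e p)) pinit pmove n =
      (e.symm ∘ (gamePlay binit bmove (fun bs => e (pinit (e.symm ∘ bs)))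
          (fun bs p => e (pmove (e.symm ∘ bs) (e.symm p))) n).1,
        e.symm (gamePlay binit bmove (fun bs => e (pinit (e.symm ∘ bs)))
          (fun bs p => e (pmove (e.symm ∘ bs) (e.symm p))) n).2) := by
  induction n with
  | zero => simp [gamePlay]
  | succ n ih => rw [gamePlay.eq_2, gamePlay.eq_2, ih]; simp [Function.comp_def]

theorem BodyguardsWin.of_iso (e : G ≃g H) (h : BodyguardsWin H k) : BodyguardsWin G k := by
  obtain ⟨binit, bmove, hlegal, hwin⟩ := h
  refine ⟨e.symm ∘ binit, fun bs p => e.symm ∘ bmove (e ∘ bs) (e p), fun bs p i => ?_,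
    fun pinit pmove hpmove => ?_⟩
  · simpa using (stepRel_iso_iff e.symm).mpr (hlegal (e ∘ bs) (e p) i)
  · obtain ⟨N, hN⟩ := hwin (fun bs => e (pinit (e.symm ∘ bs)))
      (fun bs p => e (pmove (e.symm ∘ bs) (e.symm p))) fun bs p => by
      simpa using (stepRel_iso_iff e).mpr (hpmove (e.symm ∘ bs) (e.symm p))
    refine ⟨N, fun n hn v hv => ?_⟩
    rw [gamePlay_conj e] at hv ⊢
    obtain ⟨i, hi⟩ := hN n hn (e v) (by simpa using e.map_adj_iff.mpr hv)
    exact ⟨i, by simp [hi]⟩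

end Iso

section TwoTargets

variable {V : Type*} (G : SimpleGraph V) (A B : V → V)

def ReachesTargets (bs : Fin 2 → V) (p : V) : Prop :=
  (stepRel G (bs 0) (A p) ∧ stepRel G (bs 1) (B p)) ∨
    (stepRel G (bs 0) (B p) ∧ stepRel G (bs 1) (A p))

open Classical in
noncomputable def targetMove (fallback : V → V) (bs : Fin 2 → V) (p : V) : Fin 2 → V :=
  if stepRel G (bs 0) (A p) ∧ stepRel G (bs 1) (B p) then ![A p, B p]
  else if stepRel G (bs 0) (B p) ∧ stepRel G (bs 1) (A p) then ![B p, A p]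
  else fallback ∘ bs

variable {G A B} {fallback : V → V}

lemma targetMove_legal (hfallback : ∀ x, stepRel G x (fallback x)) (bs : Fin 2 → V) (p : V)
    (i : Fin 2) : stepRel G (bs i) (targetMove G A B fallback bs p i) := by
  unfold targetMove
  split_ifs with h₁ h₂
  · fin_cases i
    exacts [h₁.1, h₁.2]
  · fin_cases i
    exacts [h₂.1, h₂.2]
  · exact hfallback _

lemma targetMove_of_reachesTargets {bs : Fin 2 → V} {p : V} (h : ReachesTargets G A B bs p) :
    targetMove G A B fallback bs p = ![A p, B p] ∨ targetMove G A B fallback bs p = ![B p, A p] := by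
  unfold targetMove
  split_ifs with h₁ h₂
  · exact Or.inl rfl
  · exact Or.inr rfl
  · exact (h.elim h₁ h₂).elim

lemma targetMove_of_not_reachesTargets {bs : Fin 2 → V} {p : V}
    (h : ¬ ReachesTargets G A B bs p) : targetMove G A B fallback bs p = fallback ∘ bs := by
  unfold ReachesTargets at h
  push Not at h
  unfold targetMove
  rw [if_neg (fun h' => h.1 h'.1 h'.2 |>.elim), if_neg (fun h' => h.2 h'.1 h'.2 |>.elim)]

theorem bodyguardsWin_two_of_targets
    (htargets : ∀ p p', stepRel G p p' → stepRel G (A p) (A p') ∧ stepRel G (B p) (B p'))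
    (hnbhd : ∀ p v, G.Adj p v → v = A p ∨ v = B p)
    (hfallback : ∀ x, stepRel G x (fallback x)) (binit : Fin 2 → V)
    (Chase : (Fin 2 → V) → V → Prop) (μ : (Fin 2 → V) → ℕ)
    (hinit : ∀ p, ReachesTargets G A B binit p ∨ Chase binit p)
    (hchase : ∀ bs p p', Chase bs p → ¬ ReachesTargets G A B bs p → stepRel G p p' →
      (ReachesTargets G A B (fallback ∘ bs) p' ∨ Chase (fallback ∘ bs) p') ∧
        μ (fallback ∘ bs) < μ bs) :
    BodyguardsWin G 2 := by
  refine bodyguardsWin_of_ready_or_chase binit (targetMove G A B fallback)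
    (targetMove_legal hfallback) (ReachesTargets G A B) Chase μ hinit ?_ ?_ ?_
  · intro bs p h v hv
    rcases targetMove_of_reachesTargets (fallback := fallback) h with hm | hm <;> rw [hm] <;>
      rcases hnbhd p v hv with rfl | rfl
    exacts [⟨0, rfl⟩, ⟨1, rfl⟩, ⟨1, rfl⟩, ⟨0, rfl⟩]
  · intro bs p p' h hp
    obtain ⟨hA, hB⟩ := htargets p p' hp
    rcases targetMove_of_reachesTargets (fallback := fallback) h with hm | hm <;> rw [hm]
    exacts [Or.inl ⟨hA, hB⟩, Or.inr ⟨hB, hA⟩]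
  · intro bs p p' hc hr hp
    rw [targetMove_of_not_reachesTargets hr]
    exact hchase bs p p' hc hr hp

end TwoTargets

section Path

variable {n : ℕ}

lemma stepRel_pathGraph_iff {x y : Fin n} :
    stepRel (pathGraph n) x y ↔ x.val = y.val ∨ x.val + 1 = y.val ∨ y.val + 1 = x.val := by
  rw [stepRel, pathGraph_adj, Fin.ext_iff]

def pathLeft (p : Fin (n + 3)) : Fin (n + 3) :=
  ⟨if p.val = 0 then 1 else p.val - 1, by split <;> omega⟩

def pathRight (p : Fin (n + 3)) : Fin (n + 3) :=
  ⟨if p.val = n + 2 then n + 1 else p.val + 1, by split <;> omega⟩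

def pathShift (x : Fin (n + 3)) : Fin (n + 3) := ⟨min (x.val + 1) (n + 2), by omega⟩

/-- Starting at `0` and `2`, the guards walk rightwards in step until the president, who is to
their right, comes within reach of the targets `pathLeft p` and `pathRight p`. -/
theorem bodyguardsWin_pathGraph_two (hn : 3 ≤ n) : BodyguardsWin (pathGraph n) 2 := by
  obtain ⟨n, rfl⟩ : ∃ j, n = j + 3 := ⟨n - 3, by omega⟩
  let Chase (bs : Fin 2 → Fin (n + 3)) (p : Fin (n + 3)) : Prop :=
    (bs 1).val = (bs 0).val + 2 ∧ ((bs 0).val < p.val ∨ (bs 0).val = 0)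
  have hclose : ∀ bs p, Chase bs p → p.val ≤ (bs 0).val + 2 →
      ReachesTargets (pathGraph (n + 3)) pathLeft pathRight bs p := by
    rintro bs p ⟨h2, hpos⟩ hp
    have := (bs 1).isLt
    refine Or.inl ⟨?_, ?_⟩ <;> simp only [stepRel_pathGraph_iff, pathLeft, pathRight] <;>
      split_ifs <;> omega
  refine bodyguardsWin_two_of_targets (A := pathLeft) (B := pathRight) ?_ ?_
    (fallback := pathShift) ?_ ![0, ⟨2, by omega⟩] Chase (fun bs => n + 3 - (bs 0).val)
    (fun p => Or.inr ⟨rfl, Or.inr rfl⟩) ?_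
  · intro p p' h
    simp only [stepRel_pathGraph_iff, pathLeft, pathRight] at h ⊢
    split_ifs <;> omega
  · intro p v h
    rw [pathGraph_adj] at h
    simp only [Fin.ext_iff, pathLeft, pathRight]
    split_ifs <;> omega
  · intro x
    rw [stepRel_pathGraph_iff]
    simp only [pathShift]
    omega
  · rintro bs p p' ⟨h2, hpos⟩ hr hp
    have hfar : (bs 0).val + 3 ≤ p.val := by
      by_contra h
      exact hr (hclose bs p ⟨h2, hpos⟩ (by omega))
    have := p.isLt
    rw [stepRel_pathGraph_iff] at hp
    refine ⟨Or.inr ⟨?_, Or.inl ?_⟩, ?_⟩ <;> simp only [Function.comp_apply, pathShift] <;> omega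

theorem bodyguardsWin_pathGraph_one (h1 : 1 ≤ n) (h2 : n ≤ 2) :
    BodyguardsWin (pathGraph n) 1 := by
  refine bodyguardsWin_of_invariant ![⟨0, h1⟩] (fun _ p _ => p.rev) ?_ (fun _ _ => True)
    (fun _ => trivial) ?_ (fun _ _ _ _ _ => trivial)
  · intro bs p i
    rw [stepRel_pathGraph_iff, Fin.val_rev]
    have := (bs i).isLt
    have := p.isLt
    omega
  · intro bs p _ v hv
    rw [pathGraph_adj] at hv
    refine ⟨0, Fin.ext ?_⟩
    rw [Fin.val_rev]
    omega

end Path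

section Cycle

variable {n : ℕ}

lemma cycleGraph_adj_iff_val {m : ℕ} (hm : 2 ≤ m) {u v : Fin m} :
    (cycleGraph m).Adj u v ↔ u.val + 1 = v.val ∨ v.val + 1 = u.val ∨
      (u.val = 0 ∧ v.val + 1 = m) ∨ (v.val = 0 ∧ u.val + 1 = m) := by
  have sub_val : ∀ a b : Fin m,
      (a - b).val = if b.val ≤ a.val then a.val - b.val else m + a.val - b.val := fun a b => by
    split_ifs with h
    · exact Fin.coe_sub_iff_le.mpr h
    · exact Fin.coe_sub_iff_lt.mpr (not_le.mp h)
  rw [cycleGraph_adj', sub_val, sub_val]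
  have := u.isLt
  have := v.isLt
  split_ifs <;> omega

lemma stepRel_cycleGraph_iff {m : ℕ} (hm : 2 ≤ m) {u v : Fin m} :
    stepRel (cycleGraph m) u v ↔ u.val = v.val ∨ u.val + 1 = v.val ∨ v.val + 1 = u.val ∨
      (u.val = 0 ∧ v.val + 1 = m) ∨ (v.val = 0 ∧ u.val + 1 = m) := by
  rw [stepRel, cycleGraph_adj_iff_val hm, Fin.ext_iff]

def cycleGraphRotation (c : Fin (n + 2)) : cycleGraph (n + 2) ≃g cycleGraph (n + 2) :=
  ⟨Equiv.subRight c, by simp [cycleGraph_adj]⟩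

@[simp]
lemma cycleGraphRotation_apply (c x : Fin (n + 2)) : cycleGraphRotation c x = x - c :=
  rfl

@[simp]
lemma cycleGraphRotation_symm_apply (c x : Fin (n + 2)) :
    (cycleGraphRotation c).symm x = x + c :=
  rfl

theorem bodyguardsWin_cycleGraph_two {m : ℕ} (h3 : 3 ≤ m) (h5 : m ≤ 5) :
    BodyguardsWin (cycleGraph m) 2 := by
  -- on these short cycles guards at `0` and `2` can reach `p - 1` and `p + 1` for every `p`
  interval_cases m <;>
  exact bodyguardsWin_two_of_targets (A := fun p => p - 1) (B := fun p => p + 1)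
    (by decide) (by decide) (fallback := id) (fun _ => Or.inl rfl) ![0, 2] (fun _ _ => False)
    (fun _ => 0) (fun p => Or.inl (by revert p; unfold ReachesTargets; decide))
    (fun _ _ _ h => h.elim)

lemma covers_zero_of_canCover_near_zero {bs : Fin 2 → Fin (n + 6)}
    (h : ∀ q, stepRel (cycleGraph (n + 6)) 0 q → CanCover (cycleGraph (n + 6)) bs q) :
    Covers (cycleGraph (n + 6)) bs 0 := by
  have hadj : ∀ {u v : Fin (n + 6)}, _ := @cycleGraph_adj_iff_val (n + 6) (by omega)
  have hstep : ∀ {u v : Fin (n + 6)}, _ := @stepRel_cycleGraph_iff (n + 6) (by omega)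
  let a : Fin (n + 6) := ⟨n + 5, by omega⟩
  let b : Fin (n + 6) := ⟨1, by omega⟩
  have h₁ := (h a (Or.inr (hadj.mpr (by simp [a])))).two_guards (u := ⟨n + 4, by omega⟩) (w := 0)
    (hadj.mpr (by simp [a])) (hadj.mpr (by simp [a])) (by simp [Fin.ext_iff])
  have h₂ := (h 0 (Or.inl rfl)).two_guards (u := a) (w := b)
    (hadj.mpr (by simp [a])) (hadj.mpr (by simp [b])) (by simp [a, b, Fin.ext_iff])
  have h₃ := (h b (Or.inr (hadj.mpr (by simp [b])))).two_guards (u := 0) (w := ⟨2, by omega⟩)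
    (hadj.mpr (by simp [b])) (hadj.mpr (by simp [b])) (by simp [Fin.ext_iff])
  simp only [hstep, a, b, Fin.val_zero] at h₁ h₂ h₃
  intro v hv
  rw [hadj, Fin.val_zero] at hv
  have := (bs 0).isLt
  have := (bs 1).isLt
  have := v.isLt
  have : ((bs 0).val = v.val) ∨ ((bs 1).val = v.val) := by omega
  rcases this with h | h
  exacts [⟨0, Fin.ext h⟩, ⟨1, Fin.ext h⟩]

lemma not_canCover_three {bs : Fin 2 → Fin (n + 6)} (h0 : bs 0 = 0) :
    ¬ CanCover (cycleGraph (n + 6)) bs ⟨3, by omega⟩ := by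
  have hadj : ∀ {u v : Fin (n + 6)}, _ := @cycleGraph_adj_iff_val (n + 6) (by omega)
  intro h
  have := h.two_guards (u := ⟨2, by omega⟩) (w := ⟨4, by omega⟩) (hadj.mpr (by simp))
    (hadj.mpr (by simp)) (by simp [Fin.ext_iff])
  simp only [stepRel_cycleGraph_iff (show 2 ≤ n + 6 by omega), h0, Fin.val_zero] at this
  omega

theorem not_bodyguardsWin_cycleGraph_two {m : ℕ} (hm : 6 ≤ m) :
    ¬ BodyguardsWin (cycleGraph m) 2 := by
  obtain ⟨n, rfl⟩ : ∃ n, m = n + 6 := ⟨m - 6, by omega⟩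
  apply not_bodyguardsWin_of_escape
  · intro bs
    let r := cycleGraphRotation (n := n + 4) (bs 0)
    refine ⟨r.symm ⟨3, by omega⟩, fun h => not_canCover_three (bs := r ∘ bs) (by simp [r]) ?_⟩
    simpa using (canCover_iso_iff r).mpr h
  · intro bs bs' p hstep hsafe
    by_contra! hall
    let r := cycleGraphRotation (n := n + 4) p
    have hcov := covers_zero_of_canCover_near_zero (bs := r ∘ bs') fun q hq => by
      have := hall (r.symm q) (by simpa [r] using (stepRel_iso_iff r.symm).mpr hq)
      simpa using (canCover_iso_iff r).mpr this
    exact hsafe ⟨bs', hstep, by simpa [r, ← Function.comp_assoc] using hcov.map r.symm⟩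

end Cycle

namespace SimpleGraph.Walk

variable {V : Type*} {G : SimpleGraph V}

def IsLongestPath {u v : V} (p : G.Walk u v) : Prop :=
  p.IsPath ∧ ∀ (x y : V) (q : G.Walk x y), q.IsPath → q.length ≤ p.length

lemma exists_isLongestPath [Fintype V] [Nonempty V] :
    ∃ (u v : V) (p : G.Walk u v), p.IsLongestPath := by
  let S := {n | ∃ (x y : V) (q : G.Walk x y), q.IsPath ∧ q.length = n}
  have hne : S.Nonempty := ⟨0, Classical.arbitrary V, _, nil, IsPath.nil, rfl⟩
  have hbdd : BddAbove S := ⟨Fintype.card V, by rintro _ ⟨x, y, q, hq, rfl⟩; exact hq.length_lt.le⟩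
  obtain ⟨u, v, p, hp, hlen⟩ := Nat.sSup_mem hne hbdd
  exact ⟨u, v, p, hp, fun x y q hq => hlen ▸ le_csSup hbdd ⟨x, y, q, hq, rfl⟩⟩

variable {u v : V} {p : G.Walk u v}

lemma IsLongestPath.reverse (hp : p.IsLongestPath) : p.reverse.IsLongestPath :=
  ⟨hp.1.reverse, by simpa using hp.2⟩

lemma IsLongestPath.mem_support_of_adj (hp : p.IsLongestPath) {y : V} (hy : G.Adj y u) :
    y ∈ p.support := by
  by_contra hy'
  simpa using hp.2 _ _ (cons hy p) (hp.1.cons hy')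

variable [Fintype V] [DecidableRel G.Adj]

lemma IsPath.adj_getVert_eq_or_eq (hp : p.IsPath) (hdeg : ∀ v, G.degree v ≤ 2) {i : ℕ}
    (h0 : 0 < i) (hi : i < p.length) {y : V} (hy : G.Adj (p.getVert i) y) :
    y = p.getVert (i - 1) ∨ y = p.getVert (i + 1) := by
  have hprev := p.adj_getVert_succ (i := i - 1) (by omega)
  rw [Nat.sub_add_cancel h0] at hprev
  refine eq_or_eq_of_adj_of_degree_le_two (hdeg _) hprev.symm (p.adj_getVert_succ hi) ?_ hy
  intro h
  have := hp.getVert_injOn (show i - 1 ≤ p.length by omega) (show i + 1 ≤ p.length by omega) h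
  omega

lemma IsLongestPath.adj_start (hp : p.IsLongestPath) (hdeg : ∀ v, G.degree v ≤ 2) {y : V}
    (hy : G.Adj u y) : ∃ j ≤ p.length, p.getVert j = y ∧ (j = 1 ∨ j = p.length) := by
  obtain ⟨j, rfl, hj⟩ := mem_support_iff_exists_getVert.mp (hp.mem_support_of_adj hy.symm)
  refine ⟨j, hj, rfl, ?_⟩
  have hj0 : j ≠ 0 := by
    rintro rfl
    exact G.irrefl (p.getVert_zero ▸ hy)
  by_contra! hmid
  rcases hp.1.adj_getVert_eq_or_eq hdeg (by omega) (by omega) hy.symm with hu | hu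
  · have := hp.1.getVert_injOn (show 0 ≤ p.length by omega) (show j - 1 ≤ p.length by omega)
      (p.getVert_zero.trans hu)
    omega
  · have := hp.1.getVert_injOn (show 0 ≤ p.length by omega) (show j + 1 ≤ p.length by omega)
      (p.getVert_zero.trans hu)
    omega

lemma IsLongestPath.adj_end (hp : p.IsLongestPath) (hdeg : ∀ v, G.degree v ≤ 2) {y : V}
    (hy : G.Adj v y) : ∃ j ≤ p.length, p.getVert j = y ∧ (j + 1 = p.length ∨ j = 0) := by
  obtain ⟨j, hj, rfl, hj'⟩ := hp.reverse.adj_start hdeg hy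
  rw [length_reverse] at hj hj'
  exact ⟨p.length - j, by omega, (p.getVert_reverse j).symm, by omega⟩

lemma IsLongestPath.adj_getVert (hp : p.IsLongestPath) (hdeg : ∀ v, G.degree v ≤ 2) {i : ℕ}
    (hi : i ≤ p.length) {y : V} (hy : G.Adj (p.getVert i) y) :
    ∃ j ≤ p.length, p.getVert j = y ∧
      (i + 1 = j ∨ j + 1 = i ∨ (i = 0 ∧ j = p.length) ∨ (i = p.length ∧ j = 0)) := by
  rcases Nat.eq_zero_or_pos i with rfl | h0
  · obtain ⟨j, hj, rfl, hj'⟩ := hp.adj_start hdeg (p.getVert_zero ▸ hy)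
    exact ⟨j, hj, rfl, by omega⟩
  rcases hi.eq_or_lt with rfl | hlt
  · obtain ⟨j, hj, rfl, hj'⟩ := hp.adj_end hdeg (p.getVert_length ▸ hy)
    exact ⟨j, hj, rfl, by omega⟩
  rcases hp.1.adj_getVert_eq_or_eq hdeg h0 hlt hy with rfl | rfl
  exacts [⟨i - 1, by omega, rfl, by omega⟩, ⟨i + 1, by omega, rfl, by omega⟩]

lemma IsLongestPath.exists_getVert_eq (hp : p.IsLongestPath) (hdeg : ∀ v, G.degree v ≤ 2)
    (hc : G.Preconnected) (w : V) : ∃ j ≤ p.length, p.getVert j = w := by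
  suffices ∀ x (q : G.Walk x w), (∃ j ≤ p.length, p.getVert j = x) →
      ∃ j ≤ p.length, p.getVert j = w from this u (hc u w).some ⟨0, by omega, p.getVert_zero⟩
  intro x q
  induction q with
  | nil => exact id
  | cons hxy q ih =>
    rintro ⟨i, hi, rfl⟩
    obtain ⟨j, hj, hjy, -⟩ := hp.adj_getVert hdeg hi hxy
    exact ih ⟨j, hj, hjy⟩

lemma IsLongestPath.adj_getVert_iff (hp : p.IsLongestPath) (hdeg : ∀ v, G.degree v ≤ 2)
    {i j : ℕ} (hi : i ≤ p.length) (hj : j ≤ p.length) :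
    G.Adj (p.getVert i) (p.getVert j) ↔ i + 1 = j ∨ j + 1 = i ∨
      (G.Adj u v ∧ ((i = 0 ∧ j = p.length) ∨ (i = p.length ∧ j = 0))) := by
  constructor
  · intro h
    obtain ⟨j', hj', hj'j, hij'⟩ := hp.adj_getVert hdeg hi h
    obtain rfl : j' = j := hp.1.getVert_injOn hj' hj hj'j
    rcases hij' with hij | hij | hij | hij
    · exact Or.inl hij
    · exact Or.inr (Or.inl hij)
    · obtain ⟨rfl, rfl⟩ := hij
      exact Or.inr (Or.inr ⟨by simpa using h, Or.inl ⟨rfl, rfl⟩⟩)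
    · obtain ⟨rfl, rfl⟩ := hij
      exact Or.inr (Or.inr ⟨by simpa using h.symm, Or.inr ⟨rfl, rfl⟩⟩)
  · rintro (rfl | rfl | ⟨huv, ⟨rfl, rfl⟩ | ⟨rfl, rfl⟩⟩)
    · exact p.adj_getVert_succ (by omega)
    · exact (p.adj_getVert_succ (by omega)).symm
    · simpa using huv
    · simpa using huv.symm

end SimpleGraph.Walk

theorem SimpleGraph.Connected.exists_iso_pathGraph_or_cycleGraph {V : Type*} [Fintype V]
    {G : SimpleGraph V} [DecidableRel G.Adj] (hc : G.Connected) (hdeg : ∀ v, G.degree v ≤ 2) :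
    (∃ n, Nonempty (G ≃g pathGraph n)) ∨ ∃ m, 3 ≤ m ∧ Nonempty (G ≃g cycleGraph m) := by
  have := hc.nonempty
  obtain ⟨u, v, p, hp⟩ := Walk.exists_isLongestPath (G := G)
  have hbij : Function.Bijective fun i : Fin (p.length + 1) => p.getVert i :=
    ⟨fun i j h => Fin.ext (hp.1.getVert_injOn (show i.val ≤ p.length by omega)
        (show j.val ≤ p.length by omega) h),
      fun w => by
        obtain ⟨j, hj, rfl⟩ := hp.exists_getVert_eq hdeg hc.preconnected w
        exact ⟨⟨j, by omega⟩, rfl⟩⟩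
  have hadj (i j : Fin (p.length + 1)) := hp.adj_getVert_iff hdeg (i := i) (j := j)
    (by omega) (by omega)
  by_cases hcyc : G.Adj u v ∧ 2 ≤ p.length
  · refine Or.inr ⟨p.length + 1, by omega, ⟨(RelIso.mk (Equiv.ofBijective _ hbij) ?_).symm⟩⟩
    intro i j
    rw [Equiv.ofBijective_apply, Equiv.ofBijective_apply, hadj,
      cycleGraph_adj_iff_val (by omega)]
    simp only [hcyc.1, true_and]
    omega
  · refine Or.inl ⟨p.length + 1, ⟨(RelIso.mk (Equiv.ofBijective _ hbij) ?_).symm⟩⟩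
    intro i j
    rw [Equiv.ofBijective_apply, Equiv.ofBijective_apply, hadj, pathGraph_adj]
    by_cases huv : G.Adj u v
    · have hloop : p.length ≠ 0 := fun h0 => by
        have huv' : u = v := by simpa [h0] using p.getVert_length
        exact G.irrefl (huv' ▸ huv)
      have hshort : p.length < 2 := not_le.mp fun h => hcyc ⟨huv, h⟩
      simp only [huv, true_and]
      omega
    · simp only [huv, false_and, or_false]

lemma bodyguardNumber_eq_iff {V : Type*} [Fintype V] {G : SimpleGraph V} {m : ℕ} (hm : m ≠ 0) :
    bodyguardNumber G = m ↔ BodyguardsWin G m ∧ ∀ k < m, ¬ BodyguardsWin G k := by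
  constructor
  · rintro rfl
    exact ⟨Nat.sInf_mem (Nat.nonempty_of_pos_sInf (Nat.pos_of_ne_zero hm)),
      fun k hk => Nat.notMem_of_lt_sInf hk⟩
  · rintro ⟨hwin, hlt⟩
    exact IsLeast.csInf_eq ⟨hwin, fun k hk => not_lt.mp fun h => hlt k h hk⟩

/-- For a connected graph `G`, `B(G) = 2` iff `G` is isomorphic to a path `P_n` with
`n ≥ 3`, or to a cycle `C_m` with `3 ≤ m ≤ 5`. -/
theorem bodyguardNumber_eq_two_iff {V : Type*} [Fintype V] (G : SimpleGraph V)
    (hc : G.Connected) :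
    bodyguardNumber G = 2 ↔
      (∃ n, 3 ≤ n ∧ Nonempty (G ≃g SimpleGraph.pathGraph n)) ∨
      (∃ m, 3 ≤ m ∧ m ≤ 5 ∧ Nonempty (G ≃g SimpleGraph.cycleGraph m)) := by
  classical
  rw [bodyguardNumber_eq_iff two_ne_zero]
  constructor
  · rintro ⟨hwin, hlt⟩
    rcases hc.exists_iso_pathGraph_or_cycleGraph (degree_le_of_bodyguardsWin hwin) with
      ⟨n, ⟨e⟩⟩ | ⟨m, hm, ⟨e⟩⟩
    · refine Or.inl ⟨n, not_lt.mp fun hn => hlt 1 one_lt_two ?_, ⟨e⟩⟩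
      exact (bodyguardsWin_pathGraph_one (e hc.nonempty.some).pos (by omega)).of_iso e
    · exact Or.inr ⟨m, hm, not_lt.mp fun hm6 =>
        not_bodyguardsWin_cycleGraph_two hm6 (hwin.of_iso e.symm), ⟨e⟩⟩
  · rintro (⟨n, hn, ⟨e⟩⟩ | ⟨m, hm3, hm5, ⟨e⟩⟩)
    · refine ⟨(bodyguardsWin_pathGraph_two hn).of_iso e, fun k hk hwin => ?_⟩
      have := two_le_of_bodyguardsWin (hwin.of_iso e.symm) (v := ⟨1, by omega⟩)
        (a := ⟨0, by omega⟩) (b := ⟨2, by omega⟩) (pathGraph_adj.mpr (by simp))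
        (pathGraph_adj.mpr (by simp)) (by simp)
      omega
    · refine ⟨(bodyguardsWin_cycleGraph_two hm3 hm5).of_iso e, fun k hk hwin => ?_⟩
      have := two_le_of_bodyguardsWin (hwin.of_iso e.symm) (v := ⟨0, by omega⟩)
        (a := ⟨1, by omega⟩) (b := ⟨m - 1, by omega⟩)
        ((cycleGraph_adj_iff_val (by omega)).mpr (by simp))
        ((cycleGraph_adj_iff_val (by omega)).mpr (by
          simp only [zero_add, Nat.add_eq_zero_iff, one_ne_zero, and_false, true_and, false_or]
          omega))
        (by simp only [ne_eq, Fin.mk.injEq]; omega)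
      omega
end

section
/- For n ≥ 2, B(P_2 □ P_n) = 2 if n = 2 and B(P_2 □ P_n) = 3 if n ≥ 3. -/
open SimpleGraph

/-!
A president who never moves forces the bodyguards to stand on all his neighbours at once, so
`B(G)` is at least the maximum degree: 2 for the square `P₂ □ P₂`, 3 for longer ladders.

Conversely, once the bodyguards stand on the neighbours `(1 - b, c)`, `(b, c - 1)`, `(b, c + 1)` of
the president's vertex `(b, c)`, they keep them forever by copying each of his moves. On the
square, two guards, one per column, reach this formation from anywhere in one move. On a longer
ladder three guards first have to catch up: two of them form a wall across a column and sweep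
towards the president with the third one column behind; if he waits just in front of the wall in
the row away from the third guard, all three move to the other row, one opposite him and two
behind, and shadow him; if he slips past them, the wall sweeps back the other way. Until the
formation is reached, every round lowers a rank that starts below `3n`.
-/

/-- `m - 1` truncates: a rank-`0` state may persist, and from then on every response covers. -/
theorem bodyguardsWin_of_rank {V : Type*} (G : SimpleGraph V) {k : ℕ}
    (Good : (Fin k → V) → V → ℕ → Prop) (s₀ : Fin k → V) (hinit : ∀ p, ∃ m, Good s₀ p m)
    (hstep : ∀ s p m, Good s p m → ∃ s', (∀ i, stepRel G (s i) (s' i)) ∧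
      (m = 0 → ∀ v, G.Adj p v → ∃ i, s' i = v) ∧
      ∀ p', stepRel G p p' → ∃ m' ≤ m - 1, Good s' p' m') :
    BodyguardsWin G k := by
  classical
  let bmove : (Fin k → V) → V → Fin k → V := fun s p =>
    if h : ∃ m, Good s p m then (hstep s p _ (Nat.find_spec h)).choose else s
  have hbmove : ∀ s p m, Good s p m → ∃ m₀ ≤ m, (∀ i, stepRel G (s i) (bmove s p i)) ∧
      (m₀ = 0 → ∀ v, G.Adj p v → ∃ i, bmove s p i = v) ∧
      ∀ p', stepRel G p p' → ∃ m' ≤ m₀ - 1, Good (bmove s p) p' m' := by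
    intro s p m hm
    have h : ∃ m, Good s p m := ⟨m, hm⟩
    simp only [bmove, dif_pos h]
    exact ⟨_, Nat.find_min' h hm, (hstep s p _ (Nat.find_spec h)).choose_spec⟩
  have hlegal : ∀ s p i, stepRel G (s i) (bmove s p i) := by
    intro s p i
    by_cases h : ∃ m, Good s p m
    · obtain ⟨m, hm⟩ := h
      obtain ⟨_, _, hleg, -⟩ := hbmove s p m hm
      exact hleg i
    · simp only [bmove, dif_neg h]
      exact Or.inl rfl
  refine ⟨s₀, bmove, hlegal, fun pinit pmove hpmove => ?_⟩
  obtain ⟨m₀, hm₀⟩ := hinit (pinit s₀)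
  set play := gamePlay s₀ bmove pinit pmove
  have hrank : ∀ t, ∃ m ≤ m₀ - t, Good (play t).1 (play t).2 m := by
    intro t
    induction t with
    | zero => exact ⟨m₀, le_rfl, hm₀⟩
    | succ t ih =>
      obtain ⟨m, hm, hgood⟩ := ih
      obtain ⟨m₁, hm₁, -, -, hnext⟩ := hbmove _ _ m hgood
      obtain ⟨m', hm', hgood'⟩ := hnext _ (hpmove _ _)
      exact ⟨m', by omega, hgood'⟩
  refine ⟨m₀, fun t ht v hv => ?_⟩
  obtain ⟨m, hm, hgood⟩ := hrank t
  obtain ⟨m₁, hm₁, -, hcover, -⟩ := hbmove _ _ m hgood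
  exact hcover (by omega) v hv

def MovesTo {V : Type*} (G : SimpleGraph V) {k : ℕ} (s t : Fin k → V) : Prop :=
  ∃ σ : Equiv.Perm (Fin k), ∀ i, stepRel G (s i) (t (σ i))

theorem movesTo_of_injective {V : Type*} {G : SimpleGraph V} {k : ℕ} {s t : Fin k → V}
    (f : Fin k → Fin k) (hf : f.Injective) (h : ∀ i, stepRel G (s i) (t (f i))) :
    MovesTo G s t :=
  ⟨Equiv.ofBijective f (Finite.injective_iff_bijective.mp hf), h⟩

theorem MovesTo.of_comp {V : Type*} {G : SimpleGraph V} {k : ℕ} {s t : Fin k → V}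
    {σ : Equiv.Perm (Fin k)} (h : MovesTo G (s ∘ σ) t) : MovesTo G s t := by
  obtain ⟨π, hπ⟩ := h
  exact ⟨π * σ.symm, fun i => by simpa using hπ (σ.symm i)⟩

theorem bodyguardsWin_of_formation {V : Type*} (G : SimpleGraph V) {k : ℕ}
    (F : V → Fin k → V) (hcover : ∀ p v, G.Adj p v → ∃ i, F p i = v)
    (hF : ∀ p p', stepRel G p p' → ∀ i, stepRel G (F p i) (F p' i))
    (Stage : (Fin k → V) → V → ℕ → Prop) (s₀ : Fin k → V) (hinit : ∀ p, ∃ m, Stage s₀ p m)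
    (hstep : ∀ s p m, Stage s p m → MovesTo G s (F p) ∨
      ∃ s', MovesTo G s s' ∧ ∀ p', stepRel G p p' → ∃ m' < m, Stage s' p' m') :
    BodyguardsWin G k := by
  refine bodyguardsWin_of_rank G (fun s p m => MovesTo G s (F p) ∨
    ∃ σ : Equiv.Perm (Fin k), Stage (s ∘ σ) p m) s₀
    (fun p => (hinit p).imp fun m h => Or.inr ⟨1, h⟩) ?_
  have capture : ∀ s p m, MovesTo G s (F p) → ∃ s', (∀ i, stepRel G (s i) (s' i)) ∧
      (m = 0 → ∀ v, G.Adj p v → ∃ i, s' i = v) ∧ ∀ p', stepRel G p p' → ∃ m' ≤ m - 1,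
        MovesTo G s' (F p') ∨ ∃ σ : Equiv.Perm (Fin k), Stage (s' ∘ σ) p' m' := by
    rintro s p m ⟨σ, hσ⟩
    refine ⟨F p ∘ σ, hσ, fun _ v hv => ?_,
      fun p' hp' => ⟨0, Nat.zero_le _, Or.inl ⟨σ, fun i => hF p p' hp' (σ i)⟩⟩⟩
    obtain ⟨i, rfl⟩ := hcover p v hv
    exact ⟨σ.symm i, by simp⟩
  rintro s p m (hcap | ⟨σ, hstage⟩)
  · exact capture s p m hcap
  rcases hstep _ p m hstage with hcap | ⟨s', ⟨π, hπ⟩, hnext⟩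
  · exact capture s p m hcap.of_comp
  obtain ⟨m', hm', -⟩ := hnext p (Or.inl rfl)
  refine ⟨s' ∘ π ∘ σ.symm, fun i => by simpa using hπ (σ.symm i),
    fun hm0 => absurd hm' (by omega), fun p' hp' => ?_⟩
  obtain ⟨m', hm', hstage'⟩ := hnext p' hp'
  refine ⟨m', by omega, Or.inr ⟨σ * π.symm, ?_⟩⟩
  convert hstage' using 1
  funext i
  simp

theorem BodyguardsWin.card_le_of_forall_adj {V : Type*} {G : SimpleGraph V} {k : ℕ}
    (h : BodyguardsWin G k) {v : V} {s : Finset V} (hs : ∀ w ∈ s, G.Adj v w) : s.card ≤ k := by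
  classical
  obtain ⟨s₀, bmove, -, hwin⟩ := h
  obtain ⟨N, hN⟩ := hwin (fun _ => v) (fun _ p => p) (fun _ _ => Or.inl rfl)
  have hstay : ∀ t, (gamePlay s₀ bmove (fun _ => v) (fun _ p => p) t).2 = v := by
    intro t
    induction t with
    | zero => rfl
    | succ t ih => exact ih
  calc s.card
      ≤ (Finset.univ.image (gamePlay s₀ bmove (fun _ => v) (fun _ p => p) (N + 1)).1).card := by
        refine Finset.card_le_card fun w hw => ?_
        have hadj : G.Adj (gamePlay s₀ bmove (fun _ => v) (fun _ p => p) N).2 w := by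
          rw [hstay N]
          exact hs w hw
        simpa using hN N le_rfl w hadj
    _ ≤ k := Finset.card_image_le.trans (by simp)

theorem bodyguardNumber_eq_of_le_card {V : Type*} [Fintype V] {G : SimpleGraph V} {k : ℕ}
    (hwin : BodyguardsWin G k) {v : V} {s : Finset V} (hs : ∀ w ∈ s, G.Adj v w)
    (hk : k ≤ s.card) : bodyguardNumber G = k :=
  IsLeast.csInf_eq ⟨hwin, fun _ h => hk.trans (h.card_le_of_forall_adj hs)⟩

abbrev ladder (n : ℕ) : SimpleGraph (Fin 2 × Fin n) := pathGraph 2 □ pathGraph n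

section Ladder

variable {n : ℕ}

theorem ladder_adj_iff {u v : Fin 2 × Fin n} :
    (ladder n).Adj u v ↔ ((u.2 : ℕ) = v.2 ∧ (u.1 : ℕ) ≠ v.1) ∨
      ((u.1 : ℕ) = v.1 ∧ ((u.2 : ℕ) + 1 = v.2 ∨ (v.2 : ℕ) + 1 = u.2)) := by
  have := u.1.isLt; have := v.1.isLt
  simp only [boxProd_adj, pathGraph_adj, Fin.ext_iff]
  omega

theorem ladder_stepRel_iff {u v : Fin 2 × Fin n} :
    stepRel (ladder n) u v ↔ (u.2 : ℕ) = v.2 ∨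
      ((u.1 : ℕ) = v.1 ∧ ((u.2 : ℕ) + 1 = v.2 ∨ (v.2 : ℕ) + 1 = u.2)) := by
  rw [stepRel, ladder_adj_iff, Prod.ext_iff, Fin.ext_iff, Fin.ext_iff]
  omega

variable [NeZero n]

/-- Out-of-range coordinates are clamped, so that at the ends of the ladder
`ladderVertex b (c - 1)` and `ladderVertex b (c + 1)` are the vertex `(b, c)` itself. -/
def ladderVertex (r c : ℕ) : Fin 2 × Fin n :=
  (⟨min r 1, by omega⟩, ⟨min c (n - 1), by have := NeZero.pos n; omega⟩)

@[simp] theorem ladderVertex_fst_val (r c : ℕ) :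
    ((ladderVertex r c : Fin 2 × Fin n).1 : ℕ) = min r 1 := rfl

@[simp] theorem ladderVertex_snd_val (r c : ℕ) :
    ((ladderVertex r c : Fin 2 × Fin n).2 : ℕ) = min c (n - 1) := rfl

def ladderFormation (p : Fin 2 × Fin n) : Fin 3 → Fin 2 × Fin n :=
  ![ladderVertex (1 - p.1) p.2, ladderVertex p.1 (p.2 - 1), ladderVertex p.1 (p.2 + 1)]

theorem exists_ladderFormation_eq_of_adj {p v : Fin 2 × Fin n} (h : (ladder n).Adj p v) :
    ∃ i, ladderFormation p i = v := by
  have := p.1.isLt; have := p.2.isLt; have := v.1.isLt; have := v.2.isLt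
  rw [ladder_adj_iff] at h
  simp [ladderFormation, Fin.exists_fin_succ, Prod.ext_iff, Fin.ext_iff]
  omega

theorem stepRel_ladderFormation {p p' : Fin 2 × Fin n} (h : stepRel (ladder n) p p')
    (i : Fin 3) :
    stepRel (ladder n) (ladderFormation p i) (ladderFormation p' i) := by
  have := p.1.isLt; have := p.2.isLt; have := p'.1.isLt; have := p'.2.isLt
  rw [ladder_stepRel_iff] at h
  fin_cases i <;> simp [ladderFormation, ladder_stepRel_iff] <;> omega

inductive CaptureStage : (Fin 3 → Fin 2 × Fin n) → Fin 2 × Fin n → ℕ → Prop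
  | sweepLeft {x r : ℕ} {p : Fin 2 × Fin n} (hx : x < n) (hr : r < 2)
      (hp : (p.2 : ℕ) ≤ x ∨ ((p.2 : ℕ) = x + 1 ∧ (p.1 : ℕ) = r)) :
      CaptureStage ![ladderVertex 0 x, ladderVertex 1 x, ladderVertex r (x + 1)] p (n + 2 * x)
  | shadow {r y : ℕ} {p : Fin 2 × Fin n} (hr : r < 2) (hy : y + 1 < n)
      (hp : stepRel (ladder n) (ladderVertex (1 - r) y) p) :
      CaptureStage ![ladderVertex r y, ladderVertex r (y + 1), ladderVertex r (y + 1)] p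
        (n + 2 * y + 1)
  | sweepRight {x r : ℕ} {p : Fin 2 × Fin n} (hx : x + 1 < n) (hr : r < 2)
      (hp : stepRel (ladder n) (ladderVertex r (x + 1)) p) :
      CaptureStage ![ladderVertex 0 (x + 1), ladderVertex 1 (x + 1), ladderVertex r x] p
        (n - (x + 1))

theorem movesTo_ladderFormation_of_sweepLeft {x r : ℕ} {p : Fin 2 × Fin n} (hp : x ≤ p.2)
    (hp' : (p.2 : ℕ) ≤ x ∨ ((p.2 : ℕ) = x + 1 ∧ (p.1 : ℕ) = r)) :
    MovesTo (ladder n) ![ladderVertex 0 x, ladderVertex 1 x, ladderVertex r (x + 1)]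
      (ladderFormation p) := by
  have := p.1.isLt; have := p.2.isLt
  obtain hb | hb : (p.1 : ℕ) = 0 ∨ (p.1 : ℕ) = 1 := by omega
  · refine movesTo_of_injective ![1, 0, 2] (by decide) ?_
    simp [Fin.forall_fin_succ, ladderFormation, ladder_stepRel_iff]
    omega
  · refine movesTo_of_injective ![0, 1, 2] (by decide) ?_
    simp [Fin.forall_fin_succ, ladderFormation, ladder_stepRel_iff]
    omega

theorem movesTo_ladderFormation_of_sweepRight {x r : ℕ} {p : Fin 2 × Fin n} (hx : x + 1 < n)
    (hr : r < 2) (hp : stepRel (ladder n) (ladderVertex r (x + 1)) p)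
    (hp' : ¬ ((p.2 : ℕ) = x + 2 ∧ (p.1 : ℕ) = r)) :
    MovesTo (ladder n) ![ladderVertex 0 (x + 1), ladderVertex 1 (x + 1), ladderVertex r x]
      (ladderFormation p) := by
  have := p.1.isLt; have := p.2.isLt
  rw [ladder_stepRel_iff] at hp
  simp only [ladderVertex_fst_val, ladderVertex_snd_val] at hp
  obtain hb | hb : (p.1 : ℕ) = 0 ∨ (p.1 : ℕ) = 1 := by omega
  · refine movesTo_of_injective ![2, 0, 1] (by decide) ?_
    simp [Fin.forall_fin_succ, ladderFormation, ladder_stepRel_iff]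
    omega
  · refine movesTo_of_injective ![0, 2, 1] (by decide) ?_
    simp [Fin.forall_fin_succ, ladderFormation, ladder_stepRel_iff]
    omega

theorem CaptureStage.sweepLeft_step {x r : ℕ} {p : Fin 2 × Fin n} (hx : x < n) (hr : r < 2)
    (hp : (p.2 : ℕ) ≤ x ∨ ((p.2 : ℕ) = x + 1 ∧ (p.1 : ℕ) = r)) :
    MovesTo (ladder n) ![ladderVertex 0 x, ladderVertex 1 x, ladderVertex r (x + 1)]
        (ladderFormation p) ∨
      ∃ s', MovesTo (ladder n)
          ![ladderVertex 0 x, ladderVertex 1 x, ladderVertex r (x + 1)] s' ∧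
        ∀ p', stepRel (ladder n) p p' → ∃ m' < n + 2 * x, CaptureStage s' p' m' := by
  have := p.1.isLt; have := p.2.isLt
  by_cases hcap : x ≤ p.2
  · exact Or.inl (movesTo_ladderFormation_of_sweepLeft hcap hp)
  right
  obtain ⟨x, rfl⟩ : ∃ x', x = x' + 1 := ⟨x - 1, by omega⟩
  by_cases hlead : (p.2 : ℕ) = x ∧ (p.1 : ℕ) ≠ r
  · refine ⟨![ladderVertex r x, ladderVertex r (x + 1), ladderVertex r (x + 1)], ?_,
      fun p' hp' => ⟨_, by omega, .shadow hr hx ?_⟩⟩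
    · obtain rfl | rfl : r = 0 ∨ r = 1 := by omega
      · refine movesTo_of_injective ![0, 1, 2] (by decide) ?_
        simp [Fin.forall_fin_succ, ladder_stepRel_iff]
        omega
      · refine movesTo_of_injective ![1, 0, 2] (by decide) ?_
        simp [Fin.forall_fin_succ, ladder_stepRel_iff]
        omega
    · rw [ladder_stepRel_iff] at hp' ⊢
      simp only [ladderVertex_fst_val, ladderVertex_snd_val]
      omega
  · refine ⟨![ladderVertex 0 x, ladderVertex 1 x, ladderVertex r (x + 1)], ?_,
      fun p' hp' => ⟨_, by omega, .sweepLeft (by omega) hr ?_⟩⟩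
    · refine movesTo_of_injective id Function.injective_id ?_
      simp [Fin.forall_fin_succ, ladder_stepRel_iff]
      omega
    · rw [ladder_stepRel_iff] at hp'
      have := p'.1.isLt
      omega

theorem CaptureStage.shadow_step {r y : ℕ} {p : Fin 2 × Fin n} (hr : r < 2) (hy : y + 1 < n)
    (hp : stepRel (ladder n) (ladderVertex (1 - r) y) p) :
    ∃ s', MovesTo (ladder n)
        ![ladderVertex r y, ladderVertex r (y + 1), ladderVertex r (y + 1)] s' ∧
      ∀ p', stepRel (ladder n) p p' → ∃ m' < n + 2 * y + 1, CaptureStage s' p' m' := by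
  have := p.1.isLt; have := p.2.isLt
  rw [ladder_stepRel_iff] at hp
  simp only [ladderVertex_fst_val, ladderVertex_snd_val] at hp
  obtain hcol | hleft | hright : (p.2 : ℕ) = y ∨ (p.2 : ℕ) + 1 = y ∨ (p.2 : ℕ) = y + 1 := by
    omega
  · refine ⟨![ladderVertex 0 y, ladderVertex 1 y, ladderVertex p.1 (y + 1)], ?_,
      fun p' hp' => ⟨_, by omega, .sweepLeft (by omega) p.1.isLt ?_⟩⟩
    · obtain rfl | rfl : r = 0 ∨ r = 1 := by omega
      · refine movesTo_of_injective ![1, 0, 2] (by decide) ?_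
        simp [Fin.forall_fin_succ, ladder_stepRel_iff]
        omega
      · refine movesTo_of_injective ![0, 1, 2] (by decide) ?_
        simp [Fin.forall_fin_succ, ladder_stepRel_iff]
        omega
    · rw [ladder_stepRel_iff] at hp'
      omega
  · obtain ⟨y, rfl⟩ : ∃ y', y = y' + 1 := ⟨y - 1, by omega⟩
    refine ⟨![ladderVertex r y, ladderVertex r (y + 1), ladderVertex r (y + 1)], ?_,
      fun p' hp' => ⟨_, by omega, .shadow hr (by omega) ?_⟩⟩
    · refine movesTo_of_injective id Function.injective_id ?_
      simp [Fin.forall_fin_succ, ladder_stepRel_iff]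
      omega
    · rw [ladder_stepRel_iff] at hp' ⊢
      simp only [ladderVertex_fst_val, ladderVertex_snd_val]
      omega
  · refine ⟨![ladderVertex 0 (y + 1), ladderVertex 1 (y + 1), ladderVertex (1 - r) y], ?_,
      fun p' hp' => ⟨_, by omega, .sweepRight hy (by omega) ?_⟩⟩
    · obtain rfl | rfl : r = 0 ∨ r = 1 := by omega
      · refine movesTo_of_injective ![2, 0, 1] (by decide) ?_
        simp [Fin.forall_fin_succ, ladder_stepRel_iff]
      · refine movesTo_of_injective ![2, 1, 0] (by decide) ?_
        simp [Fin.forall_fin_succ, ladder_stepRel_iff]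
    · rw [ladder_stepRel_iff] at hp' ⊢
      simp only [ladderVertex_fst_val, ladderVertex_snd_val]
      omega

theorem CaptureStage.sweepRight_step {x r : ℕ} {p : Fin 2 × Fin n} (hx : x + 1 < n)
    (hr : r < 2) (hp : stepRel (ladder n) (ladderVertex r (x + 1)) p) :
    MovesTo (ladder n) ![ladderVertex 0 (x + 1), ladderVertex 1 (x + 1), ladderVertex r x]
        (ladderFormation p) ∨
      ∃ s', MovesTo (ladder n)
          ![ladderVertex 0 (x + 1), ladderVertex 1 (x + 1), ladderVertex r x] s' ∧
        ∀ p', stepRel (ladder n) p p' → ∃ m' < n - (x + 1), CaptureStage s' p' m' := by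
  by_cases hright : (p.2 : ℕ) = x + 2 ∧ (p.1 : ℕ) = r
  · right
    refine ⟨![ladderVertex 0 (x + 2), ladderVertex 1 (x + 2), ladderVertex r (x + 1)], ?_,
      fun p' hp' => ⟨_, by omega, .sweepRight (by omega) hr ?_⟩⟩
    · refine movesTo_of_injective id Function.injective_id ?_
      simp [Fin.forall_fin_succ, ladder_stepRel_iff]
      omega
    · rw [ladder_stepRel_iff] at hp' ⊢
      simp only [ladderVertex_fst_val, ladderVertex_snd_val]
      omega
  · exact Or.inl (movesTo_ladderFormation_of_sweepRight hx hr hp hright)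

theorem CaptureStage.step {s : Fin 3 → Fin 2 × Fin n} {p : Fin 2 × Fin n} {m : ℕ}
    (h : CaptureStage s p m) :
    MovesTo (ladder n) s (ladderFormation p) ∨
      ∃ s', MovesTo (ladder n) s s' ∧
        ∀ p', stepRel (ladder n) p p' → ∃ m' < m, CaptureStage s' p' m' := by
  cases h with
  | sweepLeft hx hr hp => exact CaptureStage.sweepLeft_step hx hr hp
  | shadow hr hy hp => exact Or.inr (CaptureStage.shadow_step hr hy hp)
  | sweepRight hx hr hp => exact CaptureStage.sweepRight_step hx hr hp

theorem bodyguardsWin_ladder_three : BodyguardsWin (ladder n) 3 := by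
  refine bodyguardsWin_of_formation (ladder n) ladderFormation
    (fun _ _ => exists_ladderFormation_eq_of_adj) (fun _ _ h => stepRel_ladderFormation h)
    CaptureStage _ (fun p => ⟨_, .sweepLeft (r := 0) (Nat.sub_lt (NeZero.pos n) one_pos)
      (by omega) (Or.inl (Nat.le_sub_one_of_lt p.2.isLt))⟩) fun _ _ _ => CaptureStage.step

end Ladder

def squareFormation (p : Fin 2 × Fin 2) : Fin 2 → Fin 2 × Fin 2 :=
  ![ladderVertex (1 - p.1) p.2, ladderVertex p.1 (1 - p.2)]

theorem bodyguardsWin_ladder_two : BodyguardsWin (ladder 2) 2 := by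
  refine bodyguardsWin_of_formation (ladder 2) squareFormation (fun p v hv => ?_)
    (fun p p' hp i => ?_) (fun s _ _ => s = ![ladderVertex 0 0, ladderVertex 1 1]) _
    (fun _ => ⟨0, rfl⟩) ?_
  · have := p.1.isLt; have := p.2.isLt; have := v.1.isLt; have := v.2.isLt
    rw [ladder_adj_iff] at hv
    simp [squareFormation, Fin.exists_fin_succ, Prod.ext_iff, Fin.ext_iff]
    omega
  · have := p.1.isLt; have := p.2.isLt; have := p'.1.isLt; have := p'.2.isLt
    rw [ladder_stepRel_iff] at hp
    fin_cases i <;> simp [squareFormation, ladder_stepRel_iff] <;> omega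
  · rintro _ p _ rfl
    left
    have := p.1.isLt; have := p.2.isLt
    obtain hc | hc : (p.2 : ℕ) = 0 ∨ (p.2 : ℕ) = 1 := by omega
    · refine movesTo_of_injective id Function.injective_id ?_
      simp [Fin.forall_fin_succ, squareFormation, ladder_stepRel_iff]
      omega
    · refine movesTo_of_injective ![1, 0] (by decide) ?_
      simp [Fin.forall_fin_succ, squareFormation, ladder_stepRel_iff]
      omega

theorem bodyguardNumber_ladder_two : bodyguardNumber (ladder 2) = 2 := by
  refine bodyguardNumber_eq_of_le_card bodyguardsWin_ladder_two
    (v := ladderVertex 0 0) (s := {ladderVertex 1 0, ladderVertex 0 1}) ?_ ?_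
  · simp only [Finset.mem_insert, Finset.mem_singleton, forall_eq_or_imp, forall_eq,
      ladder_adj_iff, ladderVertex_fst_val, ladderVertex_snd_val, true_and]
    omega
  · rw [Finset.card_pair (by simp [Prod.ext_iff, Fin.ext_iff])]

theorem bodyguardNumber_ladder_of_three_le {n : ℕ} [NeZero n] (hn : 3 ≤ n) :
    bodyguardNumber (ladder n) = 3 := by
  refine bodyguardNumber_eq_of_le_card bodyguardsWin_ladder_three (v := ladderVertex 0 1)
    (s := {ladderVertex 1 1, ladderVertex 0 0, ladderVertex 0 2}) ?_ ?_
  · simp only [Finset.mem_insert, Finset.mem_singleton, forall_eq_or_imp, forall_eq,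
      ladder_adj_iff, ladderVertex_fst_val, ladderVertex_snd_val, true_and]
    omega
  · rw [Finset.card_insert_of_notMem (by simp [Prod.ext_iff, Fin.ext_iff]),
      Finset.card_pair (by simp [Prod.ext_iff, Fin.ext_iff]; omega)]

/-- For `n ≥ 2`, `B(P_2 □ P_n) = 2` if `n = 2` and `B(P_2 □ P_n) = 3` if `n ≥ 3`. -/
theorem bodyguardNumber_pathGraph_two_boxProd (n : ℕ) (hn : 2 ≤ n) :
    bodyguardNumber (SimpleGraph.pathGraph 2 □ SimpleGraph.pathGraph n) =
      if n = 2 then 2 else 3 := by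
  split_ifs with h
  · subst h
    exact bodyguardNumber_ladder_two
  · have : NeZero n := ⟨by omega⟩
    exact bodyguardNumber_ladder_of_three_le (by omega)
end
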